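/- arXiv:math/0202218 — 5 statements merged into one kernel-verified Lean document; each statement's English description precedes it below -/
import Mathlib

section
/- For all n ≥ 0, the number of permutations of [n] avoiding the generalized pattern 1-23 equals the n-th Bell number. -/
open Finset

/-- The Bell numbers: `bell n` is the number of set partitions of `[n]`. -/
def bell : ℕ → ℕ
  | 0 => 1
  | n + 1 => ∑ k ∈ (Finset.range (n + 1)).attach, Nat.choose n k * bell k
decreasing_by
  have := Finset.mem_range.mp k.2; omega

/-- `π` contains an occurrence of the generalized pattern `1-23`:
indices `i < j` with `j + 1 ≤ n` and `π i < π j < π (j+1)`. -/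
def Occ123 {n : ℕ} (π : Equiv.Perm (Fin n)) : Prop :=
  ∃ i j : Fin n, ∃ hj : (j : ℕ) + 1 < n,
    i < j ∧ π i < π j ∧ π j < π ⟨(j : ℕ) + 1, hj⟩

/-!
Let `π` be a permutation of `{0, …, n}` and `p` the position of its minimum `0`. An occurrence
of 1-23 cannot use `0` as its second or third letter, and any ascent after `p` forms one together
with `0`. Hence `π` avoids 1-23 iff the word before `p` avoids it and the word after `p`
decreases. The permutation is therefore determined by its prefix, an arbitrary injective
1-23-avoiding word of length `p` in `n` letters. Such a word is an increasing injection
`Fin p ↪o Fin n` composed with a 1-23-avoiding permutation of `Fin p`, so there are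
`n.choose p` times as many of them as avoiding permutations of `[p]`. Summing over `p` gives
the Bell recurrence `B (n + 1) = ∑ k, n.choose k * B k`.
-/

open Function Equiv

theorem bell_succ (n : ℕ) : bell (n + 1) = ∑ k ∈ range (n + 1), n.choose k * bell k := by
  rw [bell, Finset.sum_attach (range (n + 1)) fun k => n.choose k * bell k]

section Words

variable {α β : Type*} [LinearOrder α] [LinearOrder β]

def HasOcc123 {m : ℕ} (w : Fin m → α) : Prop :=
  ∃ i j : Fin m, ∃ hj : (j : ℕ) + 1 < m,
    i < j ∧ w i < w j ∧ w j < w ⟨(j : ℕ) + 1, hj⟩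

theorem occ123_iff_hasOcc123 {n : ℕ} (π : Perm (Fin n)) : Occ123 π ↔ HasOcc123 ⇑π :=
  Iff.rfl

theorem StrictMono.hasOcc123_comp_iff {f : α → β} (hf : StrictMono f) {m : ℕ}
    (w : Fin m → α) : HasOcc123 (f ∘ w) ↔ HasOcc123 w := by
  simp only [HasOcc123, comp_apply, hf.lt_iff_lt]

theorem exists_lt_succ_of_not_strictAntiOn_Ioi {n : ℕ} {w : Fin (n + 1) → α}
    (hw : Injective w) {p : Fin (n + 1)} (h : ¬StrictAntiOn w (Set.Ioi p)) :
    ∃ j : Fin (n + 1), ∃ hj : (j : ℕ) + 1 < n + 1,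
      p < j ∧ w j < w ⟨(j : ℕ) + 1, hj⟩ := by
  contrapose! h
  refine strictAntiOn_of_succ_lt Set.ordConnected_Ioi fun a ha hpa _ => ?_
  obtain ⟨j, rfl⟩ := Fin.eq_castSucc_of_ne_last (x := a) <| by
    rintro rfl
    exact ha fun b _ => b.le_last
  rw [Fin.orderSucc_castSucc]
  exact (h j.castSucc j.succ.isLt hpa).lt_of_ne (hw.ne (Fin.castSucc_lt_succ (i := j)).ne')

theorem hasOcc123_iff_of_forall_le {n : ℕ} {w : Fin (n + 1) → α} (hw : Injective w)
    {p : Fin (n + 1)} (hp : ∀ i, w p ≤ w i) :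
    HasOcc123 w ↔ HasOcc123 (w ∘ Fin.castLE p.isLt.le) ∨ ¬StrictAntiOn w (Set.Ioi p) := by
  constructor
  · rintro ⟨i, j, hj, hij, hwij, hwj⟩
    rcases lt_trichotomy ((j : ℕ) + 1) p with hjp | hjp | hjp
    · exact .inl ⟨⟨i, by omega⟩, ⟨j, by omega⟩, hjp, hij, hwij, hwj⟩
    · have hsucc : (⟨j + 1, hj⟩ : Fin (n + 1)) = p := Fin.ext hjp
      exact absurd hwj (hsucc ▸ not_lt.2 (hp j))
    · obtain rfl | hpj : p = j ∨ p < j := (Fin.le_iff_val_le_val.2 (by omega)).eq_or_lt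
      · exact absurd hwij (not_lt.2 (hp i))
      · exact .inr fun hanti => (hanti hpj (show (p : ℕ) < j + 1 by omega)
          (show (j : ℕ) < j + 1 by omega)).not_gt hwj
  · rintro (⟨i, j, hj, hij, hwij, hwj⟩ | hnot)
    · refine ⟨Fin.castLE _ i, Fin.castLE _ j, ?_, hij, hwij, hwj⟩
      simp only [Fin.val_castLE]
      omega
    · obtain ⟨j, hj, hpj, hwj⟩ := exists_lt_succ_of_not_strictAntiOn_Ioi hw hnot
      exact ⟨p, j, hj, hpj, (hp j).lt_of_ne (hw.ne hpj.ne), hwj⟩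

end Words

section Embeddings

variable {α : Type*} [LinearOrder α] {p : ℕ}

theorem bijective_perm_trans_orderEmbedding :
    Bijective fun x : Perm (Fin p) × (Fin p ↪o α) => x.1.toEmbedding.trans x.2.toEmbedding := by
  constructor
  · rintro ⟨σ, f⟩ ⟨τ, g⟩ h
    have hfg : f = g := by
      have hrange : Set.range (f ∘ σ) = Set.range (g ∘ τ) :=
        congrArg (fun e : Fin p ↪ α => Set.range e) h
      rwa [EquivLike.range_comp, EquivLike.range_comp, OrderEmbedding.range_inj] at hrange
    subst hfg
    exact Prod.ext (Equiv.ext fun i => f.injective (DFunLike.congr_fun h i)) rfl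
  · intro e
    have hsorted : StrictMono (e ∘ Tuple.sort e) :=
      (Tuple.monotone_sort e).strictMono_of_injective (e.injective.comp (Tuple.sort e).injective)
    exact ⟨((Tuple.sort e)⁻¹, OrderEmbedding.ofStrictMono _ hsorted), by ext; simp⟩

theorem card_avoiding_embeddings :
    Nat.card {e : Fin p ↪ α // ¬HasOcc123 ⇑e} =
      (Nat.card α).choose p * Nat.card {σ : Perm (Fin p) // ¬Occ123 σ} := by
  have hsplit :
      {e : Fin p ↪ α // ¬HasOcc123 ⇑e} ≃
        {x : Perm (Fin p) × (Fin p ↪o α) // ¬Occ123 x.1} :=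
    ((Equiv.ofBijective _ bijective_perm_trans_orderEmbedding).subtypeEquiv fun x =>
      (x.2.strictMono.hasOcc123_comp_iff x.1).not.symm).symm
  rw [Nat.card_congr (hsplit.trans (prodSubtypeFstEquivSubtypeProd (p := (¬Occ123 ·)))),
    Nat.card_prod, Nat.card_congr Set.powersetCard.ofFinEmbEquiv, Set.powersetCard.card,
    mul_comm]

end Embeddings

theorem Equiv.Perm.eq_of_eqOn_compl_of_strictAntiOn {β : Type*} [LinearOrder β] [Finite β]
    {σ τ : Perm β} {s : Set β} (hσ : StrictAntiOn σ s) (hτ : StrictAntiOn τ s)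
    (h : Set.EqOn σ τ sᶜ) : σ = τ := by
  have himage : σ '' s = τ '' s := by
    rw [← compl_inj_iff, ← Set.image_compl_eq σ.bijective, ← Set.image_compl_eq τ.bijective,
      h.image_eq]
  have hrestrict : (σ ∘ Subtype.val : s → β) = τ ∘ Subtype.val := by
    rw [← hσ.strictAnti.range_inj hτ.strictAnti, Set.range_comp, Set.range_comp,
      Subtype.range_coe, himage]
  ext x
  by_cases hx : x ∈ s
  · exact congrFun hrestrict ⟨x, hx⟩
  · exact h hx

section Fiber

variable {n : ℕ} {p : Fin (n + 1)}

theorem apply_castLE_ne_zero {π : Perm (Fin (n + 1))} (hπ : π p = 0) (k : Fin p) :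
    π (Fin.castLE p.isLt.le k) ≠ 0 :=
  hπ ▸ π.injective.ne (Fin.ne_of_lt k.isLt)

variable (p)

def prefixEmb (π : Perm (Fin (n + 1))) (hπ : π p = 0) : Fin p ↪ Fin n where
  toFun k := (π (Fin.castLE p.isLt.le k)).pred (apply_castLE_ne_zero hπ k)
  inj' _ _ h := Fin.castLE_injective _ (π.injective (Fin.pred_inj.1 h))

theorem card_compl_map_univ (e : Fin p ↪ Fin n) :
    ((univ : Finset (Fin p)).map e)ᶜ.card = n - p := by
  simp [card_compl]

/-- The word `e 0 + 1, …, e (p - 1) + 1, 0`, followed by `v + 1` for the letters `v` missed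
by `e`, in decreasing order. -/
def withDecreasingTailFun (e : Fin p ↪ Fin n) (i : Fin (n + 1)) : Fin (n + 1) :=
  if h : i < p then (e ⟨i, h⟩).succ
  else if h' : p < i then
    ((univ.map e)ᶜ.orderEmbOfFin (card_compl_map_univ p e) ⟨n - i, by omega⟩).succ
  else 0

variable {p}

theorem succ_prefixEmb {π : Perm (Fin (n + 1))} (hπ : π p = 0) (k : Fin p) :
    (prefixEmb p π hπ k).succ = π (Fin.castLE p.isLt.le k) :=
  Fin.succ_pred _ (apply_castLE_ne_zero hπ k)

theorem withDecreasingTailFun_of_lt (e : Fin p ↪ Fin n) {i : Fin (n + 1)} (h : i < p) :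
    withDecreasingTailFun p e i = (e ⟨i, h⟩).succ :=
  dif_pos h

theorem withDecreasingTailFun_self (e : Fin p ↪ Fin n) : withDecreasingTailFun p e p = 0 := by
  simp [withDecreasingTailFun]

theorem withDecreasingTailFun_of_gt (e : Fin p ↪ Fin n) {i : Fin (n + 1)} (h : p < i) :
    withDecreasingTailFun p e i =
      ((univ.map e)ᶜ.orderEmbOfFin (card_compl_map_univ p e) ⟨n - i, by omega⟩).succ := by
  rw [withDecreasingTailFun, dif_neg h.not_gt, dif_pos h]

theorem withDecreasingTailFun_surjective (e : Fin p ↪ Fin n) :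
    Surjective (withDecreasingTailFun p e) := by
  refine Fin.cases ⟨p, withDecreasingTailFun_self e⟩ fun v => ?_
  by_cases hv : v ∈ Set.range e
  · obtain ⟨k, rfl⟩ := hv
    exact ⟨Fin.castLE p.isLt.le k, withDecreasingTailFun_of_lt e k.isLt⟩
  · have hmem : v ∈ (((univ : Finset (Fin p)).map e)ᶜ : Finset (Fin n)) := by simpa using hv
    rw [← Finset.mem_coe, ← Finset.range_orderEmbOfFin _ (card_compl_map_univ p e)] at hmem
    obtain ⟨t, rfl⟩ := hmem
    have ht := t.isLt
    refine ⟨⟨n - t, by omega⟩, ?_⟩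
    rw [withDecreasingTailFun_of_gt e (show (p : ℕ) < n - t by omega)]
    congr
    dsimp only
    omega

variable (p)

noncomputable def withDecreasingTail (e : Fin p ↪ Fin n) : Perm (Fin (n + 1)) :=
  Equiv.ofBijective _ (Finite.surjective_iff_bijective.1 (withDecreasingTailFun_surjective e))

variable {p}

theorem withDecreasingTail_apply_self (e : Fin p ↪ Fin n) : withDecreasingTail p e p = 0 :=
  withDecreasingTailFun_self e

theorem withDecreasingTail_strictAntiOn (e : Fin p ↪ Fin n) :
    StrictAntiOn (withDecreasingTail p e) (Set.Ioi p) := by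
  intro i hi j hj hij
  simp only [withDecreasingTail, coe_ofBijective, withDecreasingTailFun_of_gt e hi,
    withDecreasingTailFun_of_gt e hj, Fin.succ_lt_succ_iff, OrderEmbedding.lt_iff_lt,
    Fin.mk_lt_mk]
  have := j.isLt
  omega

theorem prefixEmb_withDecreasingTail (e : Fin p ↪ Fin n) :
    prefixEmb p (withDecreasingTail p e) (withDecreasingTail_apply_self e) = e := by
  refine DFunLike.ext _ _ fun k => ?_
  rw [← Fin.succ_inj, succ_prefixEmb]
  exact withDecreasingTailFun_of_lt e k.isLt

theorem withDecreasingTail_prefixEmb {π : Perm (Fin (n + 1))} (hπ : π p = 0)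
    (hanti : StrictAntiOn π (Set.Ioi p)) : withDecreasingTail p (prefixEmb p π hπ) = π := by
  refine Perm.eq_of_eqOn_compl_of_strictAntiOn (withDecreasingTail_strictAntiOn _) hanti
    fun i hi => ?_
  obtain hip | rfl := (not_lt.1 (show ¬p < i from hi)).lt_or_eq
  · exact (withDecreasingTailFun_of_lt _ hip).trans (succ_prefixEmb hπ ⟨i, hip⟩)
  · exact (withDecreasingTail_apply_self _).trans hπ.symm

theorem occ123_iff_of_apply_eq_zero {π : Perm (Fin (n + 1))} (hπ : π p = 0) :
    Occ123 π ↔ HasOcc123 ⇑(prefixEmb p π hπ) ∨ ¬StrictAntiOn π (Set.Ioi p) := by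
  have hprefix : Fin.succ ∘ prefixEmb p π hπ = π ∘ Fin.castLE p.isLt.le :=
    funext (succ_prefixEmb hπ)
  rw [occ123_iff_hasOcc123,
    hasOcc123_iff_of_forall_le π.injective (fun i => hπ ▸ Fin.zero_le _),
    ← Fin.strictMono_succ.hasOcc123_comp_iff (prefixEmb p π hπ), hprefix]

theorem not_hasOcc123_prefixEmb {π : Perm (Fin (n + 1))} (hπ : π p = 0)
    (havoid : ¬Occ123 π) : ¬HasOcc123 ⇑(prefixEmb p π hπ) :=
  fun h => havoid ((occ123_iff_of_apply_eq_zero hπ).2 (.inl h))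

theorem strictAntiOn_Ioi_of_not_occ123 {π : Perm (Fin (n + 1))} (hπ : π p = 0)
    (havoid : ¬Occ123 π) : StrictAntiOn π (Set.Ioi p) :=
  not_not.1 fun h => havoid ((occ123_iff_of_apply_eq_zero hπ).2 (.inr h))

theorem not_occ123_withDecreasingTail {e : Fin p ↪ Fin n} (he : ¬HasOcc123 ⇑e) :
    ¬Occ123 (withDecreasingTail p e) := by
  rw [occ123_iff_of_apply_eq_zero (withDecreasingTail_apply_self e),
    prefixEmb_withDecreasingTail]
  exact not_or.2 ⟨he, not_not.2 (withDecreasingTail_strictAntiOn e)⟩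

variable (p)

noncomputable def avoidingFiberEquiv :
    {π : Perm (Fin (n + 1)) // ¬Occ123 π ∧ π p = 0} ≃
      {e : Fin p ↪ Fin n // ¬HasOcc123 ⇑e} where
  toFun π := ⟨prefixEmb p π.1 π.2.2, not_hasOcc123_prefixEmb π.2.2 π.2.1⟩
  invFun e := ⟨withDecreasingTail p e.1, not_occ123_withDecreasingTail e.2,
    withDecreasingTail_apply_self e.1⟩
  left_inv π := Subtype.ext <|
    withDecreasingTail_prefixEmb π.2.2 (strictAntiOn_Ioi_of_not_occ123 π.2.2 π.2.1)
  right_inv e := Subtype.ext (prefixEmb_withDecreasingTail e.1)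

end Fiber

theorem Nat.card_subtype_eq_sum_card_fiber {α β : Type*} [Finite α] [Fintype β]
    (P : α → Prop) (f : α → β) :
    Nat.card {a // P a} = ∑ b, Nat.card {a // P a ∧ f a = b} := by
  rw [← Nat.card_sigma, ← Nat.card_congr (Equiv.sigmaFiberEquiv (f ∘ Subtype.val))]
  exact Nat.card_congr (sigmaCongrRight fun b => subtypeSubtypeEquivSubtypeInter P (f · = b))

theorem card_avoiding_zero : Nat.card {π : Perm (Fin 0) // ¬Occ123 π} = 1 :=
  Nat.card_eq_one_iff_unique.2 ⟨inferInstance, ⟨⟨1, fun ⟨i, _⟩ => i.elim0⟩⟩⟩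

theorem card_avoiding_succ (n : ℕ) :
    Nat.card {π : Perm (Fin (n + 1)) // ¬Occ123 π} =
      ∑ k ∈ range (n + 1), n.choose k * Nat.card {σ : Perm (Fin k) // ¬Occ123 σ} := by
  have hfiber (p : Fin (n + 1)) :
      Nat.card {π : Perm (Fin (n + 1)) // ¬Occ123 π ∧ π.symm 0 = p} =
        n.choose p * Nat.card {σ : Perm (Fin p) // ¬Occ123 σ} := by
    simp_rw [symm_apply_eq, eq_comm (a := (0 : Fin (n + 1)))]
    rw [Nat.card_congr (avoidingFiberEquiv p), card_avoiding_embeddings, Nat.card_fin]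
  rw [Nat.card_subtype_eq_sum_card_fiber _ fun π : Perm (Fin (n + 1)) => π.symm 0]
  simp_rw [hfiber]
  exact Fin.sum_univ_eq_sum_range
    (fun k => n.choose k * Nat.card {σ : Perm (Fin k) // ¬Occ123 σ}) _

/-- For all `n ≥ 0`, the number of permutations of `[n]` avoiding the
generalized pattern `1-23` equals the `n`-th Bell number. -/
theorem count_avoiding_1_23_eq_bell (n : ℕ) :
    Nat.card {π : Equiv.Perm (Fin n) // ¬ Occ123 π} = bell n := by
  induction n using Nat.strong_induction_on with
  | _ n ih =>
    cases n with
    | zero => rw [card_avoiding_zero, bell]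
    | succ n =>
      rw [card_avoiding_succ, bell_succ]
      exact sum_congr rfl fun k hk => by rw [ih k (mem_range.1 hk)]
end

section
/- For all n ≥ 0, the number of permutations of [n] avoiding the generalized pattern 13-2 equals the n-th Catalan number C_n = (1/(n+1))·binom(2n,n). -/
/-- `π` contains an occurrence of the generalized pattern `13-2`:
an index `i` with `i + 1 ≤ n` and `j > i + 1` such that `π i < π j < π (i+1)`. -/
def Occ132 {n : ℕ} (π : Equiv.Perm (Fin n)) : Prop :=
  ∃ i j : Fin n, ∃ hi : (i : ℕ) + 1 < n,
    (i : ℕ) + 1 < (j : ℕ) ∧ π i < π j ∧ π j < π ⟨(i : ℕ) + 1, hi⟩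

open Equiv

section Merge
variable {n k : ℕ}

/-- underlying function of the merged permutation -/
def mergeFun (_hk : k ≤ n) (σ : Perm (Fin k)) (τ : Perm (Fin (n - k))) (i : Fin (n+1)) :
    Fin (n+1) :=
  if h : (i : ℕ) < k then
    ⟨σ ⟨i, h⟩ + (n - k), by
      have := (σ ⟨i, h⟩).isLt; omega⟩
  else if h2 : (i : ℕ) = k then ⟨n, by omega⟩
  else
    ⟨τ ⟨(i : ℕ) - k - 1, by have := i.isLt; omega⟩, by
      have := (τ ⟨(i : ℕ) - k - 1, by have := i.isLt; omega⟩).isLt; omega⟩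

lemma mergeFun_lt (hk : k ≤ n) (σ : Perm (Fin k)) (τ : Perm (Fin (n - k))) (i : Fin (n+1))
    (h : (i : ℕ) < k) :
    mergeFun hk σ τ i = ⟨σ ⟨i, h⟩ + (n - k), by have := (σ ⟨i, h⟩).isLt; omega⟩ := by
  simp [mergeFun, h]

lemma mergeFun_eq (hk : k ≤ n) (σ : Perm (Fin k)) (τ : Perm (Fin (n - k))) (i : Fin (n+1))
    (h : (i : ℕ) = k) : mergeFun hk σ τ i = ⟨n, by omega⟩ := by
  simp [mergeFun, h]

lemma mergeFun_gt (hk : k ≤ n) (σ : Perm (Fin k)) (τ : Perm (Fin (n - k))) (i : Fin (n+1))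
    (h : k < (i : ℕ)) :
    mergeFun hk σ τ i = ⟨τ ⟨(i : ℕ) - k - 1, by have := i.isLt; omega⟩, by
      have := (τ ⟨(i : ℕ) - k - 1, by have := i.isLt; omega⟩).isLt; omega⟩ := by
  have h1 : ¬ ((i : ℕ) < k) := by omega
  have h2 : ¬ ((i : ℕ) = k) := by omega
  simp [mergeFun, h1, h2]

lemma mergeFun_injective (hk : k ≤ n) (σ : Perm (Fin k)) (τ : Perm (Fin (n - k))) :
    Function.Injective (mergeFun hk σ τ) := by
  intro a b hab
  rcases lt_trichotomy (a : ℕ) k with ha | ha | ha <;>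
    rcases lt_trichotomy (b : ℕ) k with hb | hb | hb
  · rw [mergeFun_lt hk σ τ a ha, mergeFun_lt hk σ τ b hb] at hab
    have hv := congrArg Fin.val hab; simp only [] at hv
    have h1 : (σ ⟨a, ha⟩ : ℕ) = (σ ⟨b, hb⟩ : ℕ) := by omega
    have h3 := congrArg Fin.val (σ.injective (Fin.ext h1))
    simp only [] at h3
    exact Fin.ext h3
  · rw [mergeFun_lt hk σ τ a ha, mergeFun_eq hk σ τ b hb] at hab
    have hv := congrArg Fin.val hab; simp only [] at hv
    have := (σ ⟨a, ha⟩).isLt; omega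
  · rw [mergeFun_lt hk σ τ a ha, mergeFun_gt hk σ τ b hb] at hab
    have hv := congrArg Fin.val hab; simp only [] at hv
    have := (τ ⟨(b : ℕ) - k - 1, by have := b.isLt; omega⟩).isLt; omega
  · rw [mergeFun_eq hk σ τ a ha, mergeFun_lt hk σ τ b hb] at hab
    have hv := congrArg Fin.val hab; simp only [] at hv
    have := (σ ⟨b, hb⟩).isLt; omega
  · exact Fin.ext (by omega)
  · rw [mergeFun_eq hk σ τ a ha, mergeFun_gt hk σ τ b hb] at hab
    have hv := congrArg Fin.val hab; simp only [] at hv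
    have := (τ ⟨(b : ℕ) - k - 1, by have := b.isLt; omega⟩).isLt; omega
  · rw [mergeFun_gt hk σ τ a ha, mergeFun_lt hk σ τ b hb] at hab
    have hv := congrArg Fin.val hab; simp only [] at hv
    have := (τ ⟨(a : ℕ) - k - 1, by have := a.isLt; omega⟩).isLt; omega
  · rw [mergeFun_gt hk σ τ a ha, mergeFun_eq hk σ τ b hb] at hab
    have hv := congrArg Fin.val hab; simp only [] at hv
    have := (τ ⟨(a : ℕ) - k - 1, by have := a.isLt; omega⟩).isLt; omega
  · rw [mergeFun_gt hk σ τ a ha, mergeFun_gt hk σ τ b hb] at hab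
    have hv := congrArg Fin.val hab; simp only [] at hv
    have h3 := congrArg Fin.val (τ.injective (Fin.ext hv : τ _ = τ _))
    simp only [] at h3
    exact Fin.ext (by omega)

noncomputable def merge (hk : k ≤ n) (σ : Perm (Fin k)) (τ : Perm (Fin (n - k))) : Perm (Fin (n+1)) :=
  Equiv.ofBijective _ ((Finite.injective_iff_bijective).mp (mergeFun_injective hk σ τ))

lemma merge_apply (hk : k ≤ n) (σ : Perm (Fin k)) (τ : Perm (Fin (n - k))) (i : Fin (n+1)) :
    merge hk σ τ i = mergeFun hk σ τ i := rfl

end Merge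
lemma merge_avoids {n k : ℕ} (hk : k ≤ n) (σ : Equiv.Perm (Fin k)) (τ : Equiv.Perm (Fin (n - k)))
    (hσ : ¬ Occ132 σ) (hτ : ¬ Occ132 τ) : ¬ Occ132 (merge hk σ τ) := by
  rintro ⟨i, j, hi, hij, h1, h2⟩
  simp only [merge_apply] at h1 h2
  rw [Fin.lt_def] at h1 h2
  have hiv := i.isLt
  have hjv := j.isLt
  rcases lt_trichotomy ((i : ℕ) + 1) k with hik | hik | hik
  · -- i and i+1 both in the σ region
    have hi0 : (i : ℕ) < k := by omega
    rw [mergeFun_lt hk σ τ i hi0] at h1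
    rw [mergeFun_lt hk σ τ ⟨(i : ℕ) + 1, hi⟩ (by simpa using hik)] at h2
    rcases lt_trichotomy ((j : ℕ)) k with hjk | hjk | hjk
    · rw [mergeFun_lt hk σ τ j hjk] at h1 h2
      exact hσ ⟨⟨i, hi0⟩, ⟨j, hjk⟩, (by simpa using hik), (by simpa using hij),
        Fin.lt_def.mpr (by simp only [Fin.val_fin_lt] at *; omega),
        Fin.lt_def.mpr (by simp only [Fin.val_fin_lt] at *; omega)⟩
    · rw [mergeFun_eq hk σ τ j hjk] at h2
      simp only [] at h2
      have := (σ ⟨(i : ℕ) + 1, by omega⟩).isLt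
      omega
    · rw [mergeFun_gt hk σ τ j hjk] at h1
      simp only [] at h1
      have := (τ ⟨(j : ℕ) - k - 1, by omega⟩).isLt
      omega
  · -- i+1 is the max position
    have hi0 : (i : ℕ) < k := by omega
    rw [mergeFun_lt hk σ τ i hi0] at h1
    have hjk : k < (j : ℕ) := by omega
    rw [mergeFun_gt hk σ τ j hjk] at h1
    simp only [] at h1
    have := (τ ⟨(j : ℕ) - k - 1, by omega⟩).isLt
    omega
  · rcases lt_trichotomy ((i : ℕ)) k with hik2 | hik2 | hik2
    · omega
    · -- i is the max position
      rw [mergeFun_eq hk σ τ i hik2] at h1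
      simp only [] at h1
      rcases lt_trichotomy ((j : ℕ)) k with hjk | hjk | hjk
      · rw [mergeFun_lt hk σ τ j hjk] at h1
        simp only [] at h1
        have := (σ ⟨(j : ℕ), hjk⟩).isLt
        omega
      · omega
      · rw [mergeFun_gt hk σ τ j hjk] at h1
        simp only [] at h1
        have := (τ ⟨(j : ℕ) - k - 1, by omega⟩).isLt
        omega
    · -- all three in the τ region
      have hjk : k < (j : ℕ) := by omega
      rw [mergeFun_gt hk σ τ i hik2] at h1
      rw [mergeFun_gt hk σ τ j hjk] at h1
      rw [mergeFun_gt hk σ τ j hjk] at h2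
      rw [mergeFun_gt hk σ τ ⟨(i : ℕ) + 1, hi⟩ (by simpa using by omega)] at h2
      simp only [] at h1 h2
      apply hτ
      refine ⟨⟨(i : ℕ) - k - 1, by omega⟩, ⟨(j : ℕ) - k - 1, by omega⟩, (by simp; omega),
        (by simp; omega), Fin.lt_def.mpr (by simpa using h1), ?_⟩
      simp only [Fin.lt_def, Fin.val_mk] at h2 ⊢
      simp only [show (i : ℕ) + 1 - k - 1 = (i : ℕ) - k - 1 + 1 from by omega] at h2
      exact h2
section Extract
open Equiv Finset

variable {n : ℕ} (π : Perm (Fin (n+1)))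

/-- separation: in a 13-2-avoiding permutation, everything before the max exceeds
everything after the max. -/
lemma sep_of_avoids (hπ : ¬ Occ132 π) (k : Fin (n+1)) (hk : π k = Fin.last n)
    (a b : Fin (n+1)) (ha : (a : ℕ) < k) (hb : (k : ℕ) < b) : π b < π a := by
  by_contra h
  push_neg at h
  have hab : π a ≠ π b := fun e => by
    have := π.injective e; omega
  have h1 : π a < π b := lt_of_le_of_ne h hab
  have hbl : π b < Fin.last n := by
    rcases lt_or_eq_of_le (Fin.le_last (π b)) with h' | h'
    · exact h'
    · exfalso; have := π.injective (h'.trans hk.symm); omega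
  -- take the maximal position m < k with π m < π b
  set S : Finset (Fin (n+1)) := Finset.univ.filter (fun m => (m : ℕ) < k ∧ π m < π b) with hS
  have haS : a ∈ S := by
    simp only [hS, Finset.mem_filter, Finset.mem_univ, true_and]
    exact ⟨ha, h1⟩
  have hSne : S.Nonempty := ⟨a, haS⟩
  set m := S.max' hSne with hm
  have hmS : m ∈ S := S.max'_mem hSne
  have hmk : (m : ℕ) < k := by
    have := Finset.mem_filter.mp hmS; tauto
  have hmb : π m < π b := by
    have := Finset.mem_filter.mp hmS; tauto
  have hmi : (m : ℕ) + 1 < n + 1 := by have := k.isLt; omega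
  have hnext : π b < π ⟨(m : ℕ) + 1, hmi⟩ := by
    rcases eq_or_lt_of_le (show (m : ℕ) + 1 ≤ (k : ℕ) from hmk) with h' | h'
    · have : (⟨(m : ℕ) + 1, hmi⟩ : Fin (n+1)) = k := Fin.ext h'
      rw [this, hk]
      exact hbl
    · by_contra h2
      push_neg at h2
      have hne : π ⟨(m : ℕ) + 1, hmi⟩ ≠ π b := fun e => by
        have := π.injective e
        have := congrArg Fin.val this
        simp at this
        omega
      have h3 : π ⟨(m : ℕ) + 1, hmi⟩ < π b := lt_of_le_of_ne h2 hne
      have : (⟨(m : ℕ) + 1, hmi⟩ : Fin (n+1)) ∈ S := by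
        simp only [hS, Finset.mem_filter, Finset.mem_univ, true_and]
        exact ⟨by simpa using h', h3⟩
      have := S.le_max' _ this
      rw [← hm] at this
      have := Fin.le_def.mp this
      simp at this
  exact hπ ⟨m, b, hmi, by omega, hmb, hnext⟩

end Extract
section Values
open Equiv Finset

variable {n : ℕ} (π : Perm (Fin (n+1)))

lemma val_range_of_avoids (hπ : ¬ Occ132 π) (k : Fin (n+1)) (hk : π k = Fin.last n) :
    ∀ x : Fin (n+1), x ∈ (Finset.Ioi k).image π ↔ (x : ℕ) < n - (k : ℕ) := by
  set B := (Finset.Ioi k).image π with hB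
  have hcard : B.card = n - (k : ℕ) := by
    rw [hB, Finset.card_image_of_injective _ π.injective, Fin.card_Ioi]
    omega
  have hdown : ∀ x ∈ B, ∀ y : Fin (n+1), y < x → y ∈ B := by
    intro x hx y hy
    obtain ⟨i, hiI, rfl⟩ := Finset.mem_image.mp hx
    have hki : (k : ℕ) < (i : ℕ) := Fin.lt_def.mp (Finset.mem_Ioi.mp hiI)
    set j := π.symm y with hj
    have hyj : π j = y := π.apply_symm_apply y
    rcases lt_trichotomy (j : ℕ) (k : ℕ) with h' | h' | h'
    · exfalso
      have := sep_of_avoids π hπ k hk j i h' hki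
      rw [hyj] at this
      exact absurd hy (not_lt_of_gt this)
    · exfalso
      have hjk : j = k := Fin.ext h'
      have hyl : y = Fin.last n := by rw [← hyj, hjk, hk]
      have := Fin.le_last (π i)
      rw [← hyl] at this
      exact absurd hy (not_lt_of_ge this)
    · exact Finset.mem_image.mpr ⟨j, Finset.mem_Ioi.mpr (Fin.lt_def.mpr h'), hyj⟩
  intro x
  constructor
  · intro hx
    have hsub : Finset.Iic x ⊆ B := by
      intro y hy
      rcases eq_or_lt_of_le (Finset.mem_Iic.mp hy) with h' | h'
      · rwa [h']
      · exact hdown x hx y h'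
    have h1 := Finset.card_le_card hsub
    rw [Fin.card_Iic, hcard] at h1
    omega
  · intro hx
    by_contra hxB
    have hsub : B ⊆ Finset.Iio x := by
      intro y hy
      rw [Finset.mem_Iio]
      by_contra h'
      push_neg at h'
      rcases eq_or_lt_of_le h' with h'' | h''
      · exact hxB (h'' ▸ hy)
      · exact hxB (hdown y hy x h'')
    have h1 := Finset.card_le_card hsub
    rw [Fin.card_Iio, hcard] at h1
    omega

lemma val_lt_of_gt (hπ : ¬ Occ132 π) (k : Fin (n+1)) (hk : π k = Fin.last n)
    (b : Fin (n+1)) (hb : (k : ℕ) < b) : (π b : ℕ) < n - (k : ℕ) := by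
  exact (val_range_of_avoids π hπ k hk (π b)).mp
    (Finset.mem_image.mpr ⟨b, Finset.mem_Ioi.mpr (Fin.lt_def.mpr hb), rfl⟩)

lemma val_ge_of_lt (hπ : ¬ Occ132 π) (k : Fin (n+1)) (hk : π k = Fin.last n)
    (a : Fin (n+1)) (ha : (a : ℕ) < k) : n - (k : ℕ) ≤ (π a : ℕ) := by
  by_contra h
  push_neg at h
  have := (val_range_of_avoids π hπ k hk (π a)).mpr h
  obtain ⟨i, hiI, hix⟩ := Finset.mem_image.mp this
  have := π.injective hix
  have hki := Finset.mem_Ioi.mp hiI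
  rw [this] at hki
  exact absurd (Fin.lt_def.mp hki) (by omega)

end Values
section ExtractPerms
open Equiv

variable {n : ℕ}

lemma pos_lt_k_lt (k : Fin (n+1)) (i : ℕ) (hi : i < (k : ℕ)) : i < n + 1 := by have := k.isLt; omega

lemma pi_val_upper (π : Perm (Fin (n+1))) (k : Fin (n+1)) (hk : π k = Fin.last n) (i : Fin (n+1)) (hik : i ≠ k) : (π i : ℕ) < n := by
  have h1 : π i ≠ Fin.last n := fun e => hik (π.injective (e.trans hk.symm))
  have h2 := Fin.le_last (π i)
  have h3 : (π i : ℕ) ≠ n := fun e => h1 (Fin.ext e)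
  have := Fin.le_def.mp h2
  simp at this
  omega

def sigmaFun (π : Perm (Fin (n+1))) (hπ : ¬ Occ132 π) (k : Fin (n+1)) (hk : π k = Fin.last n) : Fin (k : ℕ) → Fin (k : ℕ) := fun i =>
  ⟨(π ⟨i, pos_lt_k_lt k i i.isLt⟩ : ℕ) - (n - (k : ℕ)), by
    have h1 := pi_val_upper π k hk ⟨i, pos_lt_k_lt k i i.isLt⟩
      (fun e => by have := congrArg Fin.val e; simp at this; have := i.isLt; omega)
    have h2 := val_ge_of_lt π hπ k hk ⟨i, pos_lt_k_lt k i i.isLt⟩ (by simpa using i.isLt)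
    have := k.isLt
    omega⟩

lemma sigmaFun_injective (π : Perm (Fin (n+1))) (hπ : ¬ Occ132 π) (k : Fin (n+1)) (hk : π k = Fin.last n) : Function.Injective (sigmaFun π hπ k hk) := by
  intro a b hab
  have hv := congrArg Fin.val hab
  simp only [sigmaFun, Fin.val_mk] at hv
  have h2a := val_ge_of_lt π hπ k hk ⟨a, pos_lt_k_lt k a a.isLt⟩ (by simpa using a.isLt)
  have h2b := val_ge_of_lt π hπ k hk ⟨b, pos_lt_k_lt k b b.isLt⟩ (by simpa using b.isLt)
  have : (π ⟨a, pos_lt_k_lt k a a.isLt⟩ : ℕ) = (π ⟨b, pos_lt_k_lt k b b.isLt⟩ : ℕ) := by omega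
  have := π.injective (Fin.ext this)
  have := congrArg Fin.val this
  simp at this
  exact Fin.ext this

noncomputable def sigmaPerm (π : Perm (Fin (n+1))) (hπ : ¬ Occ132 π) (k : Fin (n+1)) (hk : π k = Fin.last n) : Perm (Fin (k : ℕ)) :=
  Equiv.ofBijective _ ((Finite.injective_iff_bijective).mp (sigmaFun_injective π hπ k hk))

lemma sigmaPerm_apply (π : Perm (Fin (n+1))) (hπ : ¬ Occ132 π) (k : Fin (n+1)) (hk : π k = Fin.last n) (i : Fin (k : ℕ)) :
    sigmaPerm π hπ k hk i = sigmaFun π hπ k hk i := rfl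

lemma pos_gt_k_lt (k : Fin (n+1)) (j : ℕ) (hj : j < n - (k : ℕ)) : (k : ℕ) + 1 + j < n + 1 := by omega

def tauFun (π : Perm (Fin (n+1))) (hπ : ¬ Occ132 π) (k : Fin (n+1)) (hk : π k = Fin.last n) : Fin (n - (k : ℕ)) → Fin (n - (k : ℕ)) := fun j =>
  ⟨(π ⟨(k : ℕ) + 1 + j, pos_gt_k_lt k j j.isLt⟩ : ℕ), by
    exact val_lt_of_gt π hπ k hk _ (by simp; omega)⟩

lemma tauFun_injective (π : Perm (Fin (n+1))) (hπ : ¬ Occ132 π) (k : Fin (n+1)) (hk : π k = Fin.last n) : Function.Injective (tauFun π hπ k hk) := by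
  intro a b hab
  have hv := congrArg Fin.val hab
  simp only [tauFun, Fin.val_mk] at hv
  have := π.injective (Fin.ext hv)
  have := congrArg Fin.val this
  simp at this
  exact Fin.ext this

noncomputable def tauPerm (π : Perm (Fin (n+1))) (hπ : ¬ Occ132 π) (k : Fin (n+1)) (hk : π k = Fin.last n) : Perm (Fin (n - (k : ℕ))) :=
  Equiv.ofBijective _ ((Finite.injective_iff_bijective).mp (tauFun_injective π hπ k hk))

lemma tauPerm_apply (π : Perm (Fin (n+1))) (hπ : ¬ Occ132 π) (k : Fin (n+1)) (hk : π k = Fin.last n) (j : Fin (n - (k : ℕ))) :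
    tauPerm π hπ k hk j = tauFun π hπ k hk j := rfl

lemma sigmaPerm_avoids (π : Perm (Fin (n+1))) (hπ : ¬ Occ132 π) (k : Fin (n+1)) (hk : π k = Fin.last n) : ¬ Occ132 (sigmaPerm π hπ k hk) := by
  rintro ⟨i, j, hi, hij, h1, h2⟩
  apply hπ
  refine ⟨⟨i, pos_lt_k_lt k i i.isLt⟩, ⟨j, pos_lt_k_lt k j j.isLt⟩,
    by simp; have := k.isLt; omega, by simpa using hij, ?_, ?_⟩
  · rw [sigmaPerm_apply, sigmaPerm_apply] at h1
    have hv := Fin.lt_def.mp h1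
    simp only [sigmaFun, Fin.val_mk] at hv
    have h2a := val_ge_of_lt π hπ k hk ⟨i, pos_lt_k_lt k i i.isLt⟩ (by simpa using i.isLt)
    have h2b := val_ge_of_lt π hπ k hk ⟨j, pos_lt_k_lt k j j.isLt⟩ (by simpa using j.isLt)
    exact Fin.lt_def.mpr (by omega)
  · rw [sigmaPerm_apply, sigmaPerm_apply] at h2
    have hv := Fin.lt_def.mp h2
    simp only [sigmaFun, Fin.val_mk] at hv
    have h2a := val_ge_of_lt π hπ k hk ⟨(i : ℕ) + 1, pos_lt_k_lt k _ hi⟩ (by simpa using hi)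
    have h2b := val_ge_of_lt π hπ k hk ⟨j, pos_lt_k_lt k j j.isLt⟩ (by simpa using j.isLt)
    refine Fin.lt_def.mpr ?_
    simp only [Fin.val_mk]
    omega

lemma tauPerm_avoids (π : Perm (Fin (n+1))) (hπ : ¬ Occ132 π) (k : Fin (n+1)) (hk : π k = Fin.last n) : ¬ Occ132 (tauPerm π hπ k hk) := by
  rintro ⟨i, j, hi, hij, h1, h2⟩
  apply hπ
  have hin : (k : ℕ) + 1 + (i : ℕ) + 1 < n + 1 := by omega
  refine ⟨⟨(k : ℕ) + 1 + i, pos_gt_k_lt k i i.isLt⟩, ⟨(k : ℕ) + 1 + j, pos_gt_k_lt k j j.isLt⟩,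
    by simpa using hin, by simp; omega, ?_, ?_⟩
  · rw [tauPerm_apply, tauPerm_apply] at h1
    have hv := Fin.lt_def.mp h1
    simp only [tauFun, Fin.val_mk] at hv
    exact Fin.lt_def.mpr (by simpa using hv)
  · rw [tauPerm_apply, tauPerm_apply] at h2
    have hv := Fin.lt_def.mp h2
    simp only [tauFun, Fin.val_mk] at hv
    refine Fin.lt_def.mpr ?_
    simp only [] at hv ⊢
    have : ((⟨(k : ℕ) + 1 + i, pos_gt_k_lt k i i.isLt⟩ : Fin (n+1)) : ℕ) + 1
        = (k : ℕ) + 1 + ((i : ℕ) + 1) := by simp; omega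
    simp only [this]
    exact hv

end ExtractPerms
section Reconstruct
open Equiv

variable {n : ℕ}

lemma k_le (k : Fin (n+1)) : (k : ℕ) ≤ n := by have := k.isLt; omega

lemma merge_extract (π : Perm (Fin (n+1))) (hπ : ¬ Occ132 π) (k : Fin (n+1))
    (hk : π k = Fin.last n) :
    merge (k_le k) (sigmaPerm π hπ k hk) (tauPerm π hπ k hk) = π := by
  apply Equiv.ext
  intro i
  rw [merge_apply]
  rcases lt_trichotomy (i : ℕ) (k : ℕ) with h | h | h
  · rw [mergeFun_lt _ _ _ i h]
    have hge := val_ge_of_lt π hπ k hk i h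
    apply Fin.ext
    simp only [Fin.val_mk, sigmaPerm_apply, sigmaFun, Fin.eta]
    have := pi_val_upper π k hk i (fun e => by rw [e] at h; omega)
    omega
  · rw [mergeFun_eq _ _ _ i h]
    have : i = k := Fin.ext h
    rw [this, hk]
    apply Fin.ext
    simp
  · rw [mergeFun_gt _ _ _ i h]
    simp only [tauPerm_apply, tauFun, Fin.eta]
    exact congrArg π (Fin.ext (by simp; omega))
end Reconstruct
section Bijection
open Equiv

variable {n : ℕ}

noncomputable def gmap (n : ℕ) :
    (Σ k : Fin (n+1), {σ : Perm (Fin (k : ℕ)) // ¬ Occ132 σ} ×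
      {τ : Perm (Fin (n - (k : ℕ))) // ¬ Occ132 τ}) →
      {π : Perm (Fin (n+1)) // ¬ Occ132 π} :=
  fun x => ⟨merge (k_le x.1) x.2.1.1 x.2.2.1,
    merge_avoids (k_le x.1) x.2.1.1 x.2.2.1 x.2.1.2 x.2.2.2⟩

lemma merge_at_k (k : ℕ) (hk : k ≤ n) (σ : Perm (Fin k)) (τ : Perm (Fin (n - k))) :
    merge hk σ τ ⟨k, by omega⟩ = Fin.last n := by
  rw [merge_apply, mergeFun_eq hk σ τ _ rfl]
  apply Fin.ext
  simp

lemma gmap_bijective (n : ℕ) : Function.Bijective (gmap n) := by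
  constructor
  · rintro ⟨k, ⟨σ, hσ⟩, ⟨τ, hτ⟩⟩ ⟨k', ⟨σ', hσ'⟩, ⟨τ', hτ'⟩⟩ h
    have hperm : merge (k_le k) σ τ = merge (k_le k') σ' τ' := congrArg Subtype.val h
    -- k = k'
    have hkk : (k : ℕ) = (k' : ℕ) := by
      have h1 : merge (k_le k) σ τ ⟨(k : ℕ), by omega⟩ = Fin.last n := merge_at_k _ _ σ τ
      rw [hperm] at h1
      by_contra hne
      rcases lt_or_gt_of_ne hne with hlt | hgt
      · rw [merge_apply, mergeFun_lt (k_le k') σ' τ' _ (by simpa using hlt)] at h1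
        have := congrArg Fin.val h1
        simp at this
        have := (σ' ⟨(k : ℕ), by simpa using hlt⟩).isLt
        have := k'.isLt
        omega
      · rw [merge_apply, mergeFun_gt (k_le k') σ' τ' _ (by simpa using hgt)] at h1
        have := congrArg Fin.val h1
        simp at this
        have := (τ' ⟨(k : ℕ) - (k' : ℕ) - 1, by have := k.isLt; simp; omega⟩).isLt
        omega
    have hk' : k = k' := Fin.ext hkk
    subst hk'
    -- σ = σ'
    have hσσ : σ = σ' := by
      apply Equiv.ext
      intro i
      have hlt : ((⟨(i : ℕ), by have := i.isLt; have := k.isLt; omega⟩ : Fin (n+1)) : ℕ) < (k : ℕ) := by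
        simpa using i.isLt
      have := congrArg (fun p : Perm (Fin (n+1)) => p ⟨(i : ℕ), by have := i.isLt; have := k.isLt; omega⟩) hperm
      rw [merge_apply, merge_apply, mergeFun_lt (k_le k) σ τ _ hlt,
        mergeFun_lt (k_le k) σ' τ' _ hlt] at this
      have hv := congrArg Fin.val this
      simp only [Fin.val_mk, Fin.eta] at hv
      exact Fin.ext (by omega)
    -- τ = τ'
    have hττ : τ = τ' := by
      apply Equiv.ext
      intro j
      have hjn : (k : ℕ) + 1 + (j : ℕ) < n + 1 := by have := j.isLt; omega
      have hgt : (k : ℕ) < ((⟨(k : ℕ) + 1 + (j : ℕ), hjn⟩ : Fin (n+1)) : ℕ) := by simp; omega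
      have := congrArg (fun p : Perm (Fin (n+1)) => p ⟨(k : ℕ) + 1 + (j : ℕ), hjn⟩) hperm
      rw [merge_apply, merge_apply, mergeFun_gt (k_le k) σ τ _ hgt,
        mergeFun_gt (k_le k) σ' τ' _ hgt] at this
      have hv := congrArg Fin.val this
      simp only [Fin.val_mk] at hv
      have hidx : ((⟨(k : ℕ) + 1 + (j : ℕ), hjn⟩ : Fin (n+1)) : ℕ) - (k : ℕ) - 1 = (j : ℕ) := by
        simp
        omega
      simp only [hidx, Fin.eta] at hv
      exact Fin.ext hv
    subst hσσ
    subst hττ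
    rfl
  · rintro ⟨π, hπ⟩
    set k := π.symm (Fin.last n) with hkdef
    have hk : π k = Fin.last n := π.apply_symm_apply _
    refine ⟨⟨k, ⟨sigmaPerm π hπ k hk, sigmaPerm_avoids π hπ k hk⟩,
      ⟨tauPerm π hπ k hk, tauPerm_avoids π hπ k hk⟩⟩, ?_⟩
    exact Subtype.ext (merge_extract π hπ k hk)

end Bijection
section Count
open Equiv

/-- number of 13-2-avoiding permutations of `[n]` -/
noncomputable def A (n : ℕ) : ℕ := Nat.card {π : Perm (Fin n) // ¬ Occ132 π}

lemma A_zero : A 0 = 1 := by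
  have huniq : ∀ π : Perm (Fin 0), ¬ Occ132 π := by
    rintro π ⟨i, _, _, _, _⟩
    exact i.elim0
  rw [A, Nat.card_congr (Equiv.subtypeUnivEquiv huniq)]
  simp [Nat.card_eq_fintype_card]

lemma A_succ (n : ℕ) : A (n + 1) = ∑ k : Fin (n + 1), A k * A (n - k) := by
  classical
  rw [A, ← Nat.card_congr (Equiv.ofBijective _ (gmap_bijective n))]
  rw [Nat.card_eq_fintype_card, Fintype.card_sigma]
  apply Finset.sum_congr rfl
  intro k _
  rw [Fintype.card_prod, A, A, Nat.card_eq_fintype_card, Nat.card_eq_fintype_card]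

lemma A_eq_catalan (n : ℕ) : A n = catalan n := by
  induction n using Nat.strong_induction_on with
  | _ n ih =>
    match n with
    | 0 => rw [A_zero, catalan_zero]
    | m + 1 =>
      rw [A_succ, catalan_succ]
      apply Finset.sum_congr rfl
      intro k _
      rw [ih k (by have := k.isLt; omega), ih (m - k) (by have := k.isLt; omega)]

end Count


/-- For all `n ≥ 0`, the number of permutations of `[n]` avoiding the
generalized pattern `13-2` equals the `n`-th Catalan number
`C_n = (1/(n+1))·binom(2n, n)`. -/
theorem count_avoiding_13_2_eq_catalan (n : ℕ) :
    Nat.card {π : Equiv.Perm (Fin n) // ¬ Occ132 π} =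
      Nat.choose (2 * n) n / (n + 1) := by
  have h := A_eq_catalan n
  rw [A] at h
  rw [h, catalan_eq_centralBinom_div, Nat.centralBinom]
end

section
/- For all n ≥ 0, the number of permutations of [n] avoiding both generalized patterns 1-23 and 1-32 equals the number of involutions in S_n. -/
/-- `π` contains an occurrence of the generalized pattern `1-32`:
indices `i < j` with `j + 1 ≤ n` and `π i < π (j+1) < π j`. -/
def Occ132' {n : ℕ} (π : Equiv.Perm (Fin n)) : Prop :=
  ∃ i j : Fin n, ∃ hj : (j : ℕ) + 1 < n,
    i < j ∧ π i < π ⟨(j : ℕ) + 1, hj⟩ ∧ π ⟨(j : ℕ) + 1, hj⟩ < π j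

/-!
In a permutation avoiding both patterns, the minimum of every adjacent pair lies below all
earlier entries; in particular the value `0` sits in one of the last two positions. Delete the
last entry and standardize the rest. If the last entry is `0`, what remains is an arbitrary
avoider of length `n + 1`. Otherwise the last entry is any of `n + 1` nonzero values, `0` sits
just before it, and deleting it as well leaves an arbitrary avoider of length `n`. So
`a (n + 2) = a (n + 1) + (n + 1) * a n`, which is also the recurrence for involutions (the last
point is either fixed or exchanged with one of the other `n + 1` points), and both sequences
start `1, 1`.
-/

open Equiv Fin

/-- On injective words this is the avoidance of both `1-23` and `1-32`. -/
def Avoids123And132 {β : Type*} [LinearOrder β] {n : ℕ} (w : Fin n → β) : Prop :=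
  ∀ (i j : Fin n) (hj : (j : ℕ) + 1 < n), i < j → min (w j) (w ⟨j + 1, hj⟩) < w i

theorem not_occ123_and_not_occ132'_iff {n : ℕ} (π : Perm (Fin n)) :
    ¬Occ123 π ∧ ¬Occ132' π ↔ Avoids123And132 π := by
  simp only [Occ123, Occ132', Avoids123And132, not_exists, not_and, not_lt, ← forall_and]
  refine forall₄_congr fun i j hj hij => ?_
  have hij' : π i ≠ π j := π.injective.ne hij.ne
  have hij₁ : π i ≠ π ⟨j + 1, hj⟩ := π.injective.ne (ne_of_val_ne (by simp; omega))
  have hjj₁ : π j ≠ π ⟨j + 1, hj⟩ := π.injective.ne (ne_of_val_ne (by simp))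
  rw [min_lt_iff]
  constructor
  · rintro ⟨h₁, h₂⟩
    by_contra! ⟨hj, hj₁⟩
    rcases hjj₁.lt_or_gt with h | h
    · exact (h₁ (hj.lt_of_ne hij')).not_gt h
    · exact (h₂ (hj₁.lt_of_ne hij₁)).not_gt h
  · rintro (h | h)
    · exact ⟨fun h' => absurd h' (lt_asymm h), fun h' => (h.trans h').le⟩
    · exact ⟨fun h' => (h.trans h').le, fun h' => absurd h' (lt_asymm h)⟩

section Words

variable {β γ : Type*} [LinearOrder β] [LinearOrder γ] {m n : ℕ}

theorem avoids123And132_of_le_one (hn : n ≤ 1) (w : Fin n → β) : Avoids123And132 w :=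
  fun _ j hj _ => absurd hj (by omega)

theorem StrictMono.avoids123And132_comp_iff {g : β → γ} (hg : StrictMono g) {w : Fin n → β} :
    Avoids123And132 (g ∘ w) ↔ Avoids123And132 w := by
  simp only [Avoids123And132, Function.comp_apply, ← hg.monotone.map_min, hg.lt_iff_lt]

theorem avoids123And132_snoc_iff {v : Fin (m + 1) → β} {y : β} :
    Avoids123And132 (snoc v y : Fin (m + 2) → β) ↔
      Avoids123And132 v ∧ ∀ i < last m, min (v (last m)) y < v i := by
  have next_castSucc (j : Fin (m + 1)) (hj : (j : ℕ) + 1 < m + 1) :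
      (⟨j.castSucc + 1, by simp; omega⟩ : Fin (m + 2)) = castSucc ⟨j + 1, hj⟩ := rfl
  have next_last : (⟨(last m).castSucc + 1, by simp⟩ : Fin (m + 2)) = last (m + 1) := rfl
  constructor
  · intro h
    refine ⟨fun i j hj hij => ?_, fun i hi => ?_⟩
    · have := h i.castSucc j.castSucc (by simp; omega) (castSucc_lt_castSucc_iff.2 hij)
      rwa [next_castSucc j hj, snoc_castSucc, snoc_castSucc, snoc_castSucc] at this
    · have := h i.castSucc (last m).castSucc (by simp) (castSucc_lt_castSucc_iff.2 hi)
      rwa [next_last, snoc_castSucc, snoc_castSucc, snoc_last] at this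
  · rintro ⟨hv, hy⟩ i j hj hij
    obtain ⟨j, rfl⟩ := exists_castSucc_eq.2 (ne_of_val_ne (by simp; omega) : j ≠ last (m + 1))
    obtain ⟨i, rfl⟩ := exists_castSucc_eq.2 (ne_last_of_lt hij)
    rw [castSucc_lt_castSucc_iff] at hij
    rcases j.eq_castSucc_or_eq_last with ⟨j, rfl⟩ | rfl
    · rw [next_castSucc _ (by simp), snoc_castSucc, snoc_castSucc, snoc_castSucc]
      exact hv i j.castSucc (by simp) hij
    · rw [next_last, snoc_castSucc, snoc_castSucc, snoc_last]
      exact hy i hij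

theorem avoids123And132_snoc_of_forall_lt {w : Fin m → β} {y : β} (hy : ∀ i, y < w i) :
    Avoids123And132 (snoc w y : Fin (m + 1) → β) ↔ Avoids123And132 w := by
  cases m with
  | zero =>
    exact iff_of_true (avoids123And132_of_le_one le_rfl _) (avoids123And132_of_le_one (by omega) _)
  | succ m =>
    rw [avoids123And132_snoc_iff, and_iff_left_iff_imp]
    exact fun _ i _ => (min_le_right _ _).trans_lt (hy i)

end Words

section PermSnoc

variable {n : ℕ}

/-- The permutation ending in `v` whose first `n` values are order-isomorphic to `τ`. -/
def permSnoc (v : Fin (n + 1)) (τ : Perm (Fin n)) : Perm (Fin (n + 1)) :=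
  (finSuccEquivLast.trans τ.optionCongr).trans (finSuccEquiv' v).symm

@[simp]
theorem permSnoc_last (v : Fin (n + 1)) (τ : Perm (Fin n)) : permSnoc v τ (last n) = v := by
  simp [permSnoc, finSuccEquivLast_last]

@[simp]
theorem permSnoc_castSucc (v : Fin (n + 1)) (τ : Perm (Fin n)) (i : Fin n) :
    permSnoc v τ i.castSucc = v.succAbove (τ i) := by
  simp [permSnoc, finSuccEquivLast_castSucc]

theorem coe_permSnoc (v : Fin (n + 1)) (τ : Perm (Fin n)) :
    ⇑(permSnoc v τ) = snoc (v.succAbove ∘ τ) v := by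
  ext i
  induction i using lastCases <;> simp

theorem bijective_permSnoc :
    Function.Bijective fun p : Fin (n + 1) × Perm (Fin n) => permSnoc p.1 p.2 := by
  refine (Fintype.bijective_iff_injective_and_card _).2 ⟨?_, ?_⟩
  · rintro ⟨v, τ⟩ ⟨v', τ'⟩ h
    obtain rfl : v = v' := by simpa using congr($h (last n))
    obtain rfl : τ = τ' := Equiv.ext fun i =>
      v.succAbove_right_injective (by simpa using congr($h i.castSucc))
    rfl
  · simp [Fintype.card_perm, Nat.factorial_succ]

theorem card_subtype_eq_sum_permSnoc (P : Perm (Fin (n + 1)) → Prop) :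
    Nat.card {π // P π} = ∑ v, Nat.card {τ // P (permSnoc v τ)} := by
  rw [← Nat.card_sigma,
    ← Nat.card_congr (Equiv.subtypeProdEquivSigmaSubtype fun v τ => P (permSnoc v τ))]
  exact Nat.card_congr ((Equiv.ofBijective _ bijective_permSnoc).subtypeEquiv fun _ => Iff.rfl).symm

theorem card_subtype_apply_last_eq (P : Perm (Fin (n + 1)) → Prop) (v : Fin (n + 1)) :
    Nat.card {π // P π ∧ π (last n) = v} = Nat.card {τ // P (permSnoc v τ)} := by
  rw [card_subtype_eq_sum_permSnoc, Fintype.sum_eq_single v fun w hw => by simp [hw]]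
  simp

theorem card_subtype_eq_sum_card_apply_last (P : Perm (Fin (n + 1)) → Prop) :
    Nat.card {π // P π} = ∑ v, Nat.card {π // P π ∧ π (last n) = v} := by
  rw [card_subtype_eq_sum_permSnoc]
  exact Finset.sum_congr rfl fun v _ => (card_subtype_apply_last_eq P v).symm

theorem avoids123And132_permSnoc_zero_iff (τ : Perm (Fin n)) :
    Avoids123And132 (permSnoc 0 τ) ↔ Avoids123And132 τ := by
  rw [coe_permSnoc, avoids123And132_snoc_of_forall_lt (w := succAbove 0 ∘ τ) fun i => succ_pos _,
    (strictMono_succAbove 0).avoids123And132_comp_iff]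

theorem avoids123And132_permSnoc_succ_iff (u : Fin (n + 1)) (τ : Perm (Fin (n + 1))) :
    Avoids123And132 (permSnoc u.succ τ) ↔ Avoids123And132 τ ∧ τ (last n) = 0 := by
  have hmono := strictMono_succAbove u.succ
  rw [coe_permSnoc, avoids123And132_snoc_iff, hmono.avoids123And132_comp_iff]
  refine and_congr_right fun _ => ⟨fun h => ?_, fun h i hi => ?_⟩
  · by_contra h0
    have hi : τ.symm 0 < last n := lt_last_iff_ne_last.2 fun hi => h0 (by simp [← hi])
    simpa [succ_succAbove_zero] using h _ hi
  · have hτi : 0 < τ i := Fin.pos_iff_ne_zero.2 fun h' => hi.ne (τ.injective (h'.trans h.symm))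
    simpa [h, succ_succAbove_zero] using hmono hτi

end PermSnoc

theorem card_avoids123And132_add_two (n : ℕ) :
    Nat.card {π : Perm (Fin (n + 2)) // Avoids123And132 π} =
      Nat.card {π : Perm (Fin (n + 1)) // Avoids123And132 π} +
        (n + 1) * Nat.card {π : Perm (Fin n) // Avoids123And132 π} := by
  have hsucc (u : Fin (n + 1)) : Nat.card {τ // Avoids123And132 (permSnoc u.succ τ)} =
      Nat.card {π : Perm (Fin n) // Avoids123And132 π} := by
    simp_rw [avoids123And132_permSnoc_succ_iff, card_subtype_apply_last_eq,
      avoids123And132_permSnoc_zero_iff]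
  rw [card_subtype_eq_sum_permSnoc, Fin.sum_univ_succ]
  simp [avoids123And132_permSnoc_zero_iff, hsucc]

theorem MulEquiv.card_mul_self_eq_one {G H : Type*} [Monoid G] [Monoid H] (e : G ≃* H) :
    Nat.card {g : G // g * g = 1} = Nat.card {h : H // h * h = 1} :=
  Nat.card_congr <| e.toEquiv.subtypeEquiv fun g => by
    rw [MulEquiv.toEquiv_eq_coe, MulEquiv.coe_toEquiv, ← map_mul, map_eq_one_iff e e.injective]

theorem card_involutions_congr {α β : Type*} [Finite α] [Finite β]
    (h : Nat.card α = Nat.card β) :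
    Nat.card {σ : Perm α // σ * σ = 1} = Nat.card {σ : Perm β // σ * σ = 1} :=
  (Finite.card_eq.1 h).some.permCongrHom.card_mul_self_eq_one

section Involutions

variable {α : Type*} [DecidableEq α]

theorem card_involutions_fixing (s : Finset α) :
    Nat.card {σ : Perm α // σ * σ = 1 ∧ ∀ x ∈ s, σ x = x} =
      Nat.card {τ : Perm {x // x ∉ s} // τ * τ = 1} := by
  have hinvol (τ : Perm {x // x ∉ s}) :
      τ * τ = 1 ↔ Perm.ofSubtype τ * Perm.ofSubtype τ = 1 := by
    rw [← map_mul, map_eq_one_iff _ Perm.ofSubtype_injective]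
  rw [Nat.card_congr ((Perm.subtypeEquivSubtypePerm _).subtypeEquiv
      (q := fun f => f.1 * f.1 = 1) hinvol),
    Nat.card_congr (Equiv.subtypeSubtypeEquivSubtypeInter
      (fun f : Perm α => ∀ x, ¬x ∉ s → f x = x) (fun f => f * f = 1))]
  simp only [not_not, and_comm]

theorem Equiv.Perm.commute_swap {σ : Perm α} {a b : α} (h : swap (σ a) (σ b) = swap a b) :
    Commute σ (swap a b) := by
  rw [Commute, SemiconjBy, mul_swap_eq_swap_mul, h]

/-- Multiplying by `swap a b` turns an involution exchanging `a` and `b` into one fixing both. -/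
theorem card_involutions_apply_eq (a b : α) :
    Nat.card {σ : Perm α // σ * σ = 1 ∧ σ a = b} =
      Nat.card {ρ : Perm α // ρ * ρ = 1 ∧ ∀ x ∈ ({a, b} : Finset α), ρ x = x} := by
  refine Nat.card_congr ((Equiv.mulLeft (swap a b)).subtypeEquiv fun σ => ?_)
  simp only [coe_mulLeft, Finset.mem_insert, Finset.mem_singleton, forall_eq_or_imp, forall_eq,
    Perm.mul_apply]
  have swap_mul_mul_self (hσa : σ a = b) (hσb : σ b = a) :
      swap a b * σ * (swap a b * σ) = σ * σ := by
    have hc : Commute σ (swap a b) := Perm.commute_swap (by rw [hσa, hσb, swap_comm])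
    rw [mul_assoc, ← mul_assoc σ, hc.eq, ← mul_assoc, ← mul_assoc, swap_mul_self, one_mul]
  constructor
  · rintro ⟨hσ, hσa⟩
    have hσb : σ b = a := by rw [← hσa, ← Perm.mul_apply, hσ, Perm.one_apply]
    exact ⟨(swap_mul_mul_self hσa hσb).trans hσ, by simp [hσa], by simp [hσb]⟩
  · rintro ⟨hρ, hρa, hρb⟩
    rw [swap_apply_eq_iff, swap_apply_left] at hρa
    rw [swap_apply_eq_iff, swap_apply_right] at hρb
    exact ⟨(swap_mul_mul_self hρa hρb).symm.trans hρ, hρa⟩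

end Involutions

theorem card_involutions_add_two (n : ℕ) :
    Nat.card {σ : Perm (Fin (n + 2)) // σ * σ = 1} =
      Nat.card {σ : Perm (Fin (n + 1)) // σ * σ = 1} +
        (n + 1) * Nat.card {σ : Perm (Fin n) // σ * σ = 1} := by
  have hlast : Nat.card {σ : Perm (Fin (n + 2)) // σ * σ = 1 ∧ σ (last _) = last _} =
      Nat.card {σ : Perm (Fin (n + 1)) // σ * σ = 1} := by
    have hcard : Nat.card {x // x ∉ ({last (n + 1)} : Finset _)} = Nat.card (Fin (n + 1)) := by
      simp
    rw [← card_involutions_congr hcard, ← card_involutions_fixing]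
    simp
  have hcastSucc (i : Fin (n + 1)) :
      Nat.card {σ : Perm (Fin (n + 2)) // σ * σ = 1 ∧ σ (last _) = i.castSucc} =
        Nat.card {σ : Perm (Fin n) // σ * σ = 1} := by
    rw [card_involutions_apply_eq, card_involutions_fixing, card_involutions_congr (β := Fin n)]
    rw [Nat.card_eq_fintype_card, Fintype.card_subtype_compl, Fintype.card_coe,
      Finset.card_pair (castSucc_lt_last i).ne']
    simp
  rw [card_subtype_eq_sum_card_apply_last, Fin.sum_univ_castSucc, hlast]
  simp only [hcastSucc, Finset.sum_const, Finset.card_univ, Fintype.card_fin, smul_eq_mul]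
  ring

theorem eq_of_telephone_recurrence {a b : ℕ → ℕ} (h0 : a 0 = b 0) (h1 : a 1 = b 1)
    (ha : ∀ n, a (n + 2) = a (n + 1) + (n + 1) * a n)
    (hb : ∀ n, b (n + 2) = b (n + 1) + (n + 1) * b n) : a = b := by
  suffices h : ∀ n, a n = b n ∧ a (n + 1) = b (n + 1) from funext fun n => (h n).1
  intro n
  induction n with
  | zero => exact ⟨h0, h1⟩
  | succ n ih => exact ⟨ih.2, by rw [ha, hb, ih.1, ih.2]⟩

theorem card_avoids123And132_eq_card_involutions_of_le_one {n : ℕ} (hn : n ≤ 1) :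
    Nat.card {π : Perm (Fin n) // Avoids123And132 π} =
      Nat.card {σ : Perm (Fin n) // σ * σ = 1} :=
  have : Subsingleton (Fin n) := Fin.subsingleton_iff_le_one.2 hn
  Nat.card_congr <| Equiv.subtypeEquivRight fun _ =>
    iff_of_true (avoids123And132_of_le_one hn _) (Subsingleton.elim _ _)

/-- For all `n ≥ 0`, the number of permutations of `[n]` avoiding both
generalized patterns `1-23` and `1-32` equals the number of involutions in `S_n`. -/
theorem count_avoiding_1_23_and_1_32_eq_involutions (n : ℕ) :
    Nat.card {π : Equiv.Perm (Fin n) // ¬ Occ123 π ∧ ¬ Occ132' π} =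
      Nat.card {σ : Equiv.Perm (Fin n) // σ * σ = 1} := by
  simp_rw [not_occ123_and_not_occ132'_iff]
  have h := eq_of_telephone_recurrence
    (a := fun n => Nat.card {π : Perm (Fin n) // Avoids123And132 π})
    (b := fun n => Nat.card {σ : Perm (Fin n) // σ * σ = 1})
    (card_avoids123And132_eq_card_involutions_of_le_one zero_le_one)
    (card_avoids123And132_eq_card_involutions_of_le_one le_rfl)
    card_avoids123And132_add_two card_involutions_add_two
  exact congrFun h n
end

section
/- Let 1 ≤ a < a+l ≤ k and let c_{a,l}^k(n) denote the number of C_{a,l}^k-avoiding permutations in S_n, and c_{a,l}^k(n;j) the number of such permutations with first letter j. Then for all n ≥ k: c_{a,l}^k(n) = (k-1)·c_{a,l}^k(n-1) + Σ_{j=a}^{n-k+a} c_{a,l}^k(n;j). -/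
open Finset

/-- `π` contains an occurrence of the generalized pattern given by `σ ∈ S_k`,
where `adj j` means that positions `j` and `j+1` of the pattern must be
matched to adjacent positions of the permutation. -/
def IsOcc {n k : ℕ} (π : Equiv.Perm (Fin n)) (σ : Equiv.Perm (Fin k)) (adj : ℕ → Prop) : Prop :=
  ∃ ι : Fin k → Fin n, StrictMono ι ∧
    (∀ j : ℕ, ∀ hj : j + 1 < k, adj j → (ι ⟨j + 1, hj⟩ : ℕ) = (ι ⟨j, by omega⟩ : ℕ) + 1) ∧
    (∀ s t : Fin k, σ s < σ t ↔ π (ι s) < π (ι t))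

/-- `π` avoids every pattern in `C_{a,l}^k` (patterns `σ₁σ₂-σ₃-⋯-σ_k` with
`σ₁ = a`, `σ₂ = a + l`, first two letters adjacent); values are `1`-based. -/
def AvoidsC (a l k : ℕ) {n : ℕ} (π : Equiv.Perm (Fin n)) : Prop :=
  ∀ σ : Equiv.Perm (Fin k), ∀ h0 : 0 < k, ∀ h1 : 1 < k,
    (σ ⟨0, h0⟩ : ℕ) + 1 = a → (σ ⟨1, h1⟩ : ℕ) + 1 = a + l →
    ¬ IsOcc π σ (fun j => j = 0)

/-- `c_{a,l}^k(n)`. -/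
noncomputable def cC (a l k n : ℕ) : ℕ :=
  Nat.card {π : Equiv.Perm (Fin n) // AvoidsC a l k π}

/-- `c_{a,l}^k(n; j)`: additionally the first letter of the permutation is `j` (1-based). -/
noncomputable def cCf (a l k n j : ℕ) : ℕ :=
  Nat.card {π : Equiv.Perm (Fin n) //
    AvoidsC a l k π ∧ ∀ hn : 0 < n, (π ⟨0, hn⟩ : ℕ) + 1 = j}

/-! Deleting the first letter of a permutation `π ∈ S_{m+1}` and standardizing the rest is a
bijection from the permutations starting with `v` onto `S_m`. Every occurrence of a pattern in
the standardized tail is one in `π`. Conversely an occurrence in `π` of a pattern `σ ∈ S_k` that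
uses the first letter forces `σ₁ ≤ π₁ ≤ n - k + σ₁`, since `σ₁ - 1` matched letters lie below
`π₁` and `k - σ₁` above it. So when the first letter is outside `[a, n - k + a]`, `π` avoids
`C_{a,l}^k` iff its tail does, and each of these `k - 1` first letters contributes `c(n - 1)`. -/

section RankBounds

variable {k n : ℕ} {g : Fin k → Fin n}

theorem StrictMono.val_le_val_apply (hg : StrictMono g) (i : Fin k) : (i : ℕ) ≤ g i := by
  rw [← Fin.card_Iio i, ← Fin.card_Iio (g i)]
  exact card_le_card_of_injOn g (fun t ht => by simpa using hg (by simpa using ht))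
    hg.injective.injOn

theorem StrictMono.card_Ioi_le (hg : StrictMono g) (i : Fin k) :
    k - 1 - (i : ℕ) ≤ n - 1 - g i := by
  rw [← Fin.card_Ioi i, ← Fin.card_Ioi (g i)]
  exact card_le_card_of_injOn g (fun t ht => by simpa using hg (by simpa using ht))
    hg.injective.injOn

theorem rank_bounds_of_lt_iff {σ : Equiv.Perm (Fin k)}
    (hord : ∀ s t, σ s < σ t ↔ g s < g t) (s : Fin k) :
    (σ s : ℕ) ≤ g s ∧ k - 1 - (σ s : ℕ) ≤ n - 1 - g s := by
  have hmono : StrictMono (g ∘ σ.symm) := fun u w huw => (hord _ _).mp (by simpa using huw)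
  simpa using And.intro (hmono.val_le_val_apply (σ s)) (hmono.card_Ioi_le (σ s))

end RankBounds

namespace Equiv.Perm

variable {m : ℕ}

def dropHead (π : Perm (Fin (m + 1))) : Perm (Fin m) :=
  (finSuccAboveEquiv (0 : Fin (m + 1))).trans
    ((π.subtypeEquiv fun x => (π.injective.ne_iff (x := x) (y := 0)).symm).trans
      (finSuccAboveEquiv (π 0)).symm)

def consHead (v : Fin (m + 1)) (ρ : Perm (Fin m)) : Perm (Fin (m + 1)) :=
  (finSuccEquiv' (0 : Fin (m + 1))).trans ((optionCongr ρ).trans (finSuccEquiv' v).symm)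

theorem succAbove_dropHead (π : Perm (Fin (m + 1))) (i : Fin m) :
    (π 0).succAbove (dropHead π i) = π i.succ := by
  have h : finSuccAboveEquiv (π 0) (dropHead π i)
      = ⟨π i.succ, π.injective.ne_iff.mpr (Fin.succ_ne_zero i)⟩ := by
    simp only [dropHead, trans_apply, apply_symm_apply]
    ext
    simp [finSuccAboveEquiv_apply, subtypeEquiv_apply]
  simpa [finSuccAboveEquiv_apply] using congrArg Subtype.val h

theorem dropHead_lt_dropHead_iff (π : Perm (Fin (m + 1))) (i j : Fin m) :
    dropHead π i < dropHead π j ↔ π i.succ < π j.succ := by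
  rw [← Fin.succAbove_lt_succAbove_iff (p := π 0), succAbove_dropHead, succAbove_dropHead]

@[simp] theorem consHead_zero (v : Fin (m + 1)) (ρ : Perm (Fin m)) : consHead v ρ 0 = v := by
  simp [consHead, finSuccEquiv'_at, finSuccEquiv'_symm_none]

@[simp] theorem consHead_succ (v : Fin (m + 1)) (ρ : Perm (Fin m)) (i : Fin m) :
    consHead v ρ i.succ = v.succAbove (ρ i) := by
  rw [consHead, trans_apply, ← Fin.succAbove_zero, finSuccEquiv'_succAbove]
  simp [finSuccEquiv'_symm_some]

theorem dropHead_consHead (v : Fin (m + 1)) (ρ : Perm (Fin m)) :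
    dropHead (consHead v ρ) = ρ := by
  ext i
  apply congrArg Fin.val
  apply Fin.succAbove_right_injective (p := v)
  simpa using succAbove_dropHead (consHead v ρ) i

theorem consHead_dropHead (π : Perm (Fin (m + 1))) : consHead (π 0) (dropHead π) = π := by
  ext x
  induction x using Fin.cases with
  | zero => rw [consHead_zero]
  | succ i => rw [consHead_succ, succAbove_dropHead]

end Equiv.Perm

open Equiv Perm

section Occurrences

variable {m k : ℕ} {π : Perm (Fin (m + 1))} {σ : Perm (Fin k)} {adj : ℕ → Prop}

theorem IsOcc.of_dropHead (h : IsOcc (dropHead π) σ adj) : IsOcc π σ adj := by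
  obtain ⟨ι, hmono, hadj, hord⟩ := h
  refine ⟨Fin.succ ∘ ι, Fin.strictMono_succ.comp hmono, fun j hj hj' => ?_, fun s t => ?_⟩
  · simpa using hadj j hj hj'
  · rw [hord, dropHead_lt_dropHead_iff]
    rfl

theorem isOcc_dropHead_of_ne_zero {ι : Fin k → Fin (m + 1)} (hι : ∀ s, ι s ≠ 0)
    (hmono : StrictMono ι)
    (hadj : ∀ j : ℕ, ∀ hj : j + 1 < k, adj j →
      (ι ⟨j + 1, hj⟩ : ℕ) = (ι ⟨j, by omega⟩ : ℕ) + 1)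
    (hord : ∀ s t, σ s < σ t ↔ π (ι s) < π (ι t)) :
    IsOcc (dropHead π) σ adj := by
  refine ⟨fun s => (ι s).pred (hι s), fun s t hst => Fin.pred_lt_pred_iff.mpr (hmono hst),
    fun j hj hj' => ?_, fun s t => ?_⟩
  · have hpos : (ι ⟨j, by omega⟩ : ℕ) ≠ 0 := Fin.val_ne_iff.mpr (hι _)
    simp only [Fin.val_pred]
    have := hadj j hj hj'
    omega
  · rw [hord, dropHead_lt_dropHead_iff, Fin.succ_pred, Fin.succ_pred]

end Occurrences

section Avoidance

variable {a l k m : ℕ} {π : Perm (Fin (m + 1))}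

theorem AvoidsC.dropHead (h : AvoidsC a l k π) : AvoidsC a l k π.dropHead :=
  fun σ h0 h1 hs0 hs1 hocc => h σ h0 h1 hs0 hs1 hocc.of_dropHead

theorem AvoidsC.of_dropHead (hv : (π 0 : ℕ) + 1 < a ∨ m + 1 - k + a < (π 0 : ℕ) + 1)
    (h : AvoidsC a l k π.dropHead) : AvoidsC a l k π := by
  rintro σ h0 h1 hs0 hs1 ⟨ι, hmono, hadj, hord⟩
  by_cases hι : ι ⟨0, h0⟩ = 0
  · have := rank_bounds_of_lt_iff (g := π ∘ ι) hord ⟨0, h0⟩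
    simp only [Function.comp_apply, hι] at this
    omega
  · have hne : ∀ s, ι s ≠ 0 := fun s hs =>
      hι (Fin.le_zero_iff.mp (hs ▸ hmono.monotone (show ⟨0, h0⟩ ≤ s from Nat.zero_le _)))
    exact h σ h0 h1 hs0 hs1 (isOcc_dropHead_of_ne_zero hne hmono hadj hord)

theorem card_avoidsC_head_eq (v : Fin (m + 1))
    (hv : (v : ℕ) + 1 < a ∨ m + 1 - k + a < (v : ℕ) + 1) :
    Nat.card {π : Perm (Fin (m + 1)) // AvoidsC a l k π ∧ π 0 = v} = cC a l k m :=
  Nat.card_congr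
    { toFun := fun π => ⟨dropHead π.1, π.2.1.dropHead⟩
      invFun := fun ρ => ⟨consHead v ρ.1,
        AvoidsC.of_dropHead (by simpa using hv) (by simpa [dropHead_consHead] using ρ.2),
        consHead_zero v ρ.1⟩
      left_inv := fun ⟨π, _, hπ⟩ => Subtype.ext (hπ ▸ consHead_dropHead π)
      right_inv := fun ρ => Subtype.ext (dropHead_consHead v ρ.1) }

end Avoidance

section Counting

variable {a l k m : ℕ}

theorem cCf_succ (j : ℕ) :
    cCf a l k (m + 1) j =
      Nat.card {π : Perm (Fin (m + 1)) // AvoidsC a l k π ∧ (π 0 : ℕ) + 1 = j} :=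
  Nat.card_congr (subtypeEquivRight fun _ => and_congr_right fun _ =>
    ⟨fun h => h m.succ_pos, fun h _ => h⟩)

theorem cC_succ_eq_sum_cCf : cC a l k (m + 1) = ∑ j ∈ Icc 1 (m + 1), cCf a l k (m + 1) j := by
  classical
  simp only [cC, cCf_succ, Nat.card_eq_fintype_card, Fintype.card_subtype]
  rw [card_eq_sum_card_fiberwise (f := fun π : Perm (Fin (m + 1)) => (π 0 : ℕ) + 1)
    (t := Icc 1 (m + 1)) fun π _ => mem_Icc.mpr ⟨Nat.le_add_left 1 _, (π 0).isLt⟩]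
  simp only [filter_filter]

theorem cCf_succ_of_notMem {j : ℕ} (hj : j ∈ Icc 1 (m + 1))
    (hj' : j ∉ Icc a (m + 1 - k + a)) : cCf a l k (m + 1) j = cC a l k m := by
  simp only [mem_Icc] at hj hj'
  rw [cCf_succ,
    ← card_avoidsC_head_eq (l := l) (⟨j - 1, by omega⟩ : Fin (m + 1)) (by simp only; omega)]
  exact Nat.card_congr (subtypeEquivRight fun π => and_congr_right fun _ => by
    rw [Fin.ext_iff]
    show (π 0 : ℕ) + 1 = j ↔ (π 0 : ℕ) = j - 1
    omega)

end Counting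

theorem cC_rec_general (a l k n : ℕ) (ha : 1 ≤ a) (hk : a + l ≤ k) (hn : k ≤ n) :
    cC a l k n = (k - 1) * cC a l k (n - 1) +
      ∑ j ∈ Finset.Icc a (n - k + a), cCf a l k n j := by
  obtain ⟨m, rfl⟩ : ∃ m, n = m + 1 := ⟨n - 1, by omega⟩
  have hsub : Icc a (m + 1 - k + a) ⊆ Icc 1 (m + 1) := Icc_subset_Icc ha (by omega)
  have hcard : #(Icc 1 (m + 1) \ Icc a (m + 1 - k + a)) = k - 1 := by
    rw [card_sdiff_of_subset hsub, Nat.card_Icc, Nat.card_Icc]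
    omega
  rw [cC_succ_eq_sum_cCf, ← sum_sdiff hsub,
    sum_congr rfl fun j hj => cCf_succ_of_notMem (mem_sdiff.mp hj).1 (mem_sdiff.mp hj).2,
    sum_const, hcard, smul_eq_mul, Nat.add_sub_cancel]

/-- Lemma 2.1: for `1 ≤ a < a + l ≤ k` and `n ≥ k`,
`c_{a,l}^k(n) = (k-1)·c_{a,l}^k(n-1) + Σ_{j=a}^{n-k+a} c_{a,l}^k(n; j)`. -/
theorem cC_rec (a l k n : ℕ) (ha : 1 ≤ a) (hl : 1 ≤ l) (hk : a + l ≤ k) (hn : k ≤ n) :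
    cC a l k n = (k - 1) * cC a l k (n - 1) +
      ∑ j ∈ Finset.Icc a (n - k + a), cCf a l k n j :=
  cC_rec_general a l k n ha hk hn
end

section
/- Let 1 ≤ a < a+l ≤ k, n ≥ k, and a ≤ j ≤ n-k+a. Then c_{a,l}^k(n;j) = (k-l-1)·c_{a,l}^k(n-2) + Σ_{i=a}^{j+l-2} c_{a,l}^k(n-1;i). -/
open Finset

-- rank of an element in an orderIsoOfFin
lemma fin_card_filter_lt {k : ℕ} (i : Fin k) :
    (Finset.univ.filter (fun j : Fin k => j < i)).card = (i : ℕ) := by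
  have : Finset.univ.filter (fun j : Fin k => j < i) = Finset.Iio i := by
    ext j; simp
  rw [this, Fin.card_Iio]

lemma rank_eq {α : Type*} [LinearOrder α] {s : Finset α} {k : ℕ} (h : s.card = k) (x : s) :
    (((s.orderIsoOfFin h).symm x : Fin k) : ℕ) = (s.filter (· < (x : α))).card := by
  classical
  set f := s.orderIsoOfFin h with hf
  have himg : s.filter (· < (x : α)) =
      (Finset.univ.filter (fun j : Fin k => j < f.symm x)).image (fun j => (f j : α)) := by
    ext t
    simp only [Finset.mem_filter, Finset.mem_image, Finset.mem_univ, true_and]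
    constructor
    · rintro ⟨ht, hlt⟩
      refine ⟨f.symm ⟨t, ht⟩, ?_, by simp⟩
      rw [f.symm.lt_iff_lt]
      exact Subtype.mk_lt_mk.mpr hlt
    · rintro ⟨j, hj, rfl⟩
      refine ⟨(f j).2, ?_⟩
      have : f j < f (f.symm x) := by rwa [f.lt_iff_lt]
      rw [f.apply_symm_apply] at this
      exact this
  rw [himg]
  have hinj : Function.Injective (fun j : Fin k => (f j : α)) :=
    Subtype.coe_injective.comp f.injective
  rw [Finset.card_image_of_injective _ hinj, fin_card_filter_lt]

lemma card_filter_perm {k : ℕ} (σ : Equiv.Perm (Fin k)) (p : Fin k → Prop) [DecidablePred p] :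
    (Finset.univ.filter (fun t => p (σ t))).card = (Finset.univ.filter p).card := by
  apply Finset.card_bij (fun t _ => σ t)
  · intro t ht; simp only [Finset.mem_filter, Finset.mem_univ, true_and] at *; exact ht
  · intro s hs t ht hst; exact σ.injective hst
  · intro t ht
    simp only [Finset.mem_filter, Finset.mem_univ, true_and] at *
    exact ⟨σ.symm t, by simpa using ht, by simp⟩

section fiber
variable {m : ℕ}

def consPerm (p : Fin (m + 1)) (e : Equiv.Perm (Fin m)) : Equiv.Perm (Fin (m + 1)) :=
  (finSuccEquiv m).trans ((Equiv.optionCongr e).trans (finSuccEquiv' p).symm)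

@[simp] lemma consPerm_zero (p : Fin (m + 1)) (e : Equiv.Perm (Fin m)) :
    consPerm p e 0 = p := by
  simp [consPerm]

@[simp] lemma consPerm_succ (p : Fin (m + 1)) (e : Equiv.Perm (Fin m)) (i : Fin m) :
    consPerm p e i.succ = p.succAbove (e i) := by
  simp [consPerm, finSuccEquiv'_symm_some]

def tailPerm (π : Equiv.Perm (Fin (m + 1))) : Equiv.Perm (Fin m) :=
  ((finSuccEquiv m).symm.trans (π.trans (finSuccEquiv' (π 0)))).removeNone

lemma succAbove_tailPerm (π : Equiv.Perm (Fin (m + 1))) (i : Fin m) :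
    (π 0).succAbove (tailPerm π i) = π i.succ := by
  set e := (finSuccEquiv m).symm.trans (π.trans (finSuccEquiv' (π 0))) with he
  have hne : π i.succ ≠ π 0 := fun h => (Fin.succ_ne_zero i) (π.injective h)
  obtain ⟨z, hz⟩ := Fin.exists_succAbove_eq hne
  have hsome : e (some i) = some z := by
    simp only [he, Equiv.trans_apply, Equiv.symm_apply_apply, finSuccEquiv_symm_some, ← hz,
      finSuccEquiv'_succAbove]
  have := Equiv.removeNone_some e ⟨z, hsome⟩
  rw [hsome] at this
  have hti : tailPerm π i = z := Option.some_injective _ this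
  rw [hti, hz]

def fiberEquiv (p : Fin (m + 1)) :
    {π : Equiv.Perm (Fin (m + 1)) // π 0 = p} ≃ Equiv.Perm (Fin m) where
  toFun π := tailPerm π.1
  invFun e := ⟨consPerm p e, consPerm_zero p e⟩
  left_inv := by
    rintro ⟨π, rfl⟩
    ext x
    simp only
    induction x using Fin.cases with
    | zero => simp
    | succ i => rw [consPerm_succ, succAbove_tailPerm]
  right_inv e := by
    ext i
    show (tailPerm (consPerm p e) i : ℕ) = e i
    have h := succAbove_tailPerm (consPerm p e) i
    rw [consPerm_zero, consPerm_succ] at h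
    exact congrArg Fin.val ((Fin.succAbove_right_injective (p := p)) h)

lemma tailPerm_consPerm (p : Fin (m + 1)) (e : Equiv.Perm (Fin m)) :
    tailPerm (consPerm p e) = e := (fiberEquiv p).right_inv e

end fiber
/-- an occurrence whose first pattern letter is at position 0 -/
def BadStart (a l k : ℕ) {n : ℕ} (π : Equiv.Perm (Fin n)) : Prop :=
  ∃ σ : Equiv.Perm (Fin k), ∃ h0 : 0 < k, ∃ h1 : 1 < k,
    ((σ ⟨0, h0⟩ : ℕ) + 1 = a) ∧ ((σ ⟨1, h1⟩ : ℕ) + 1 = a + l) ∧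
    ∃ ι : Fin k → Fin n, StrictMono ι ∧ (ι ⟨0, h0⟩ : ℕ) = 0 ∧
      (∀ j : ℕ, ∀ hj : j + 1 < k, j = 0 → (ι ⟨j + 1, hj⟩ : ℕ) = (ι ⟨j, by omega⟩ : ℕ) + 1) ∧
      (∀ s t : Fin k, σ s < σ t ↔ π (ι s) < π (ι t))

section split
variable {a l k m : ℕ}

lemma avoids_iff (π : Equiv.Perm (Fin (m + 1))) :
    AvoidsC a l k π ↔ AvoidsC a l k (tailPerm π) ∧ ¬ BadStart a l k π := by
  constructor
  · intro hav
    constructor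
    · intro σ h0 h1 hs0 hs1 hocc
      obtain ⟨ι', mono, adj, ord⟩ := hocc
      refine hav σ h0 h1 hs0 hs1 ⟨Fin.succ ∘ ι', Fin.strictMono_succ.comp mono, ?_, ?_⟩
      · intro j hj hj0
        have := adj j hj hj0
        simp only [Function.comp_apply, Fin.val_succ]
        omega
      · intro s t
        rw [ord s t]
        simp only [Function.comp_apply]
        rw [← succAbove_tailPerm, ← succAbove_tailPerm]
        exact Fin.succAbove_lt_succAbove_iff.symm
    · rintro ⟨σ, h0, h1, hs0, hs1, ι, mono, hι0, adj, ord⟩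
      exact hav σ h0 h1 hs0 hs1 ⟨ι, mono, fun j hj hj0 => adj j hj hj0, ord⟩
  · rintro ⟨hta, hnb⟩ σ h0 h1 hs0 hs1 ⟨ι, mono, adj, ord⟩
    by_cases h : (ι ⟨0, h0⟩ : ℕ) = 0
    · exact hnb ⟨σ, h0, h1, hs0, hs1, ι, mono, h, fun j hj hj0 => adj j hj hj0, ord⟩
    · have hne : ∀ t, ι t ≠ 0 := by
        intro t ht
        apply h
        have h0t : ι ⟨0, h0⟩ ≤ ι t := mono.monotone (by simp [Fin.le_def])
        rw [ht] at h0t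
        exact le_antisymm h0t (Fin.zero_le _)
      set ι' : Fin k → Fin m := fun t => (ι t).pred (hne t) with hι'
      have hsucc : ∀ t, (ι' t).succ = ι t := fun t => Fin.succ_pred _ _
      refine hta σ h0 h1 hs0 hs1 ⟨ι', ?_, ?_, ?_⟩
      · intro s t hst
        have := mono hst
        rw [← hsucc s, ← hsucc t] at this
        exact Fin.succ_lt_succ_iff.mp this
      · intro j hj hj0
        have := adj j hj hj0
        have e1 : ((ι ⟨j + 1, hj⟩ : Fin (m+1)) : ℕ) = (ι' ⟨j + 1, hj⟩ : ℕ) + 1 := by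
          rw [← hsucc ⟨j+1, hj⟩]; simp
        have e2 : ((ι ⟨j, by omega⟩ : Fin (m+1)) : ℕ) = (ι' ⟨j, by omega⟩ : ℕ) + 1 := by
          rw [← hsucc ⟨j, by omega⟩]; simp
        omega
      · intro s t
        rw [ord s t, ← hsucc s, ← hsucc t, ← succAbove_tailPerm, ← succAbove_tailPerm]
        exact Fin.succAbove_lt_succAbove_iff
end split

def badCond (a l k n x y : ℕ) : Prop := a ≤ x + 1 ∧ x + l ≤ y ∧ y + 1 + (k - (a + l)) ≤ n

section crit
variable {a l k m : ℕ}

lemma sigma_filter_lt {k : ℕ} (σ : Equiv.Perm (Fin k)) (c : Fin k) :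
    (Finset.univ.filter (fun t => σ t < c)).card = (c : ℕ) := by
  classical
  rw [card_filter_perm σ (fun s => s < c), fin_card_filter_lt]

lemma sigma_filter_between {k : ℕ} (σ : Equiv.Perm (Fin k)) (c d : Fin k) :
    (Finset.univ.filter (fun t => c < σ t ∧ σ t < d)).card = (d : ℕ) - c - 1 := by
  classical
  rw [card_filter_perm σ (fun s => c < s ∧ s < d)]
  have : Finset.univ.filter (fun s : Fin k => c < s ∧ s < d) = Finset.Ioo c d := by
    ext j; simp [Finset.mem_Ioo]
  rw [this, Fin.card_Ioo]

lemma sigma_filter_gt {k : ℕ} (σ : Equiv.Perm (Fin k)) (c : Fin k) :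
    (Finset.univ.filter (fun t => c < σ t)).card = k - 1 - c := by
  classical
  rw [card_filter_perm σ (fun s => c < s)]
  have : Finset.univ.filter (fun s : Fin k => c < s) = Finset.Ioi c := by
    ext j; simp
  rw [this, Fin.card_Ioi]

lemma badStart_mp (hl : 1 ≤ l) (hk : a + l ≤ k) {π : Equiv.Perm (Fin (m + 2))}
    (hb : BadStart a l k π) : badCond a l k (m + 2) (π 0 : ℕ) (π 1 : ℕ) := by
  classical
  obtain ⟨σ, h0, h1, hs0, hs1, ι, mono, hι0, adj, ord⟩ := hb
  have hι0' : ι ⟨0, h0⟩ = 0 := Fin.ext (by simpa using hι0)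
  have hι1 : ι ⟨1, h1⟩ = 1 := by
    have h := adj 0 h1 rfl
    have h' : (ι ⟨1, h1⟩ : ℕ) = (ι ⟨0, h0⟩ : ℕ) + 1 := h
    apply Fin.ext
    simp only [Fin.val_one]
    omega
  have hσ01 : σ ⟨0, h0⟩ < σ ⟨1, h1⟩ := by
    rw [Fin.lt_def]; omega
  have hxy : π 0 < π 1 := by
    have := (ord ⟨0, h0⟩ ⟨1, h1⟩).mp hσ01
    rwa [hι0', hι1] at this
  set v : Fin k → Fin (m + 2) := fun t => π (ι t) with hv
  have hvinj : Function.Injective v := fun s t h => mono.injective (π.injective h)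
  -- below
  have hA : (a : ℕ) - 1 ≤ (π 0 : ℕ) := by
    have hsub : ∀ t ∈ Finset.univ.filter (fun t => σ t < σ ⟨0, h0⟩),
        v t ∈ Finset.Iio (π 0) := by
      intro t ht
      simp only [Finset.mem_filter] at ht
      have := (ord t ⟨0, h0⟩).mp ht.2
      rw [hι0'] at this
      simpa using this
    have := Finset.card_le_card_of_injOn v hsub (hvinj.injOn)
    rw [sigma_filter_lt, Fin.card_Iio] at this
    omega
  have hB : (l : ℕ) - 1 ≤ (π 1 : ℕ) - (π 0 : ℕ) - 1 := by
    have hsub : ∀ t ∈ Finset.univ.filter (fun t => σ ⟨0, h0⟩ < σ t ∧ σ t < σ ⟨1, h1⟩),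
        v t ∈ Finset.Ioo (π 0) (π 1) := by
      intro t ht
      simp only [Finset.mem_filter] at ht
      have h01 := (ord ⟨0, h0⟩ t).mp ht.2.1
      have h02 := (ord t ⟨1, h1⟩).mp ht.2.2
      rw [hι0'] at h01; rw [hι1] at h02
      simp only [Finset.mem_Ioo]
      exact ⟨h01, h02⟩
    have := Finset.card_le_card_of_injOn v hsub (hvinj.injOn)
    rw [sigma_filter_between, Fin.card_Ioo] at this
    omega
  have hC : (k : ℕ) - 1 - ((a + l) - 1) ≤ (m + 2) - 1 - (π 1 : ℕ) := by
    have hsub : ∀ t ∈ Finset.univ.filter (fun t => σ ⟨1, h1⟩ < σ t),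
        v t ∈ Finset.Ioi (π 1) := by
      intro t ht
      simp only [Finset.mem_filter] at ht
      have := (ord ⟨1, h1⟩ t).mp ht.2
      rw [hι1] at this
      simpa using this
    have := Finset.card_le_card_of_injOn v hsub (hvinj.injOn)
    rw [sigma_filter_gt, Fin.card_Ioi] at this
    omega
  have hxy' : (π 0 : ℕ) < (π 1 : ℕ) := hxy
  have hy : (π 1 : ℕ) < m + 2 := (π 1).isLt
  refine ⟨by omega, by omega, by omega⟩

end crit

section crit2
variable {a l k m : ℕ}

lemma badStart_mpr (ha : 1 ≤ a) (hl : 1 ≤ l) (hk : a + l ≤ k) {π : Equiv.Perm (Fin (m + 2))}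
    (hb : badCond a l k (m + 2) (π 0 : ℕ) (π 1 : ℕ)) : BadStart a l k π := by
  classical
  obtain ⟨hx, hxy, hy⟩ := hb
  have hxlt : (π 0 : ℕ) < m + 2 := (π 0).isLt
  have hylt : (π 1 : ℕ) < m + 2 := (π 1).isLt
  have h0 : 0 < k := by omega
  have h1 : 1 < k := by omega
  set x : ℕ := (π 0 : ℕ) with hxdef
  set y : ℕ := (π 1 : ℕ) with hydef
  set w : ℕ → ℕ := fun t =>
    if t + 1 < a then t else if t + 1 < a + l then x + (t + 1) - a
    else y + (t + 1) - (a + l) with hw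
  have hwlt : ∀ t, t < k → w t < m + 2 := by
    intro t ht
    simp only [hw]
    split_ifs <;> omega
  have hwmono : ∀ s t : ℕ, s < t → t < k → w s < w t := by
    intro s t hst htk
    simp only [hw]
    split_ifs <;> omega
  set wf : Fin k → Fin (m + 2) := fun t => ⟨w t, hwlt t t.isLt⟩ with hwf
  have hwfmono : StrictMono wf := by
    intro s t hst
    simp only [hwf, Fin.mk_lt_mk]
    exact hwmono s t hst t.isLt
  have hka : a - 1 < k := by omega
  have hkal : a + l - 1 < k := by omega
  have hwx : wf ⟨a - 1, hka⟩ = π 0 := by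
    apply Fin.ext
    show w (a - 1) = x
    simp only [hw]
    split_ifs <;> omega
  have hwy : wf ⟨a + l - 1, hkal⟩ = π 1 := by
    apply Fin.ext
    show w (a + l - 1) = y
    simp only [hw]
    split_ifs <;> omega
  set T : Finset (Fin (m + 2)) := Finset.image wf Finset.univ with hT
  have hTcard : T.card = k := by
    rw [hT, Finset.card_image_of_injective _ hwfmono.injective, Finset.card_univ,
      Fintype.card_fin]
  set S : Finset (Fin (m + 2)) := Finset.image π.symm T with hS
  have hScard : S.card = k := by
    rw [hS, Finset.card_image_of_injective _ π.symm.injective, hTcard]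
  have hmemST : ∀ v : Fin (m + 2), v ∈ S ↔ π v ∈ T := by
    intro v
    simp only [hS, Finset.mem_image]
    constructor
    · rintro ⟨u, hu, rfl⟩; simpa using hu
    · intro hv; exact ⟨π v, hv, π.symm_apply_apply v⟩
  have hπ0T : π 0 ∈ T := by
    rw [← hwx]; exact Finset.mem_image_of_mem wf (Finset.mem_univ _)
  have hπ1T : π 1 ∈ T := by
    rw [← hwy]; exact Finset.mem_image_of_mem wf (Finset.mem_univ _)
  have h0S : (0 : Fin (m + 2)) ∈ S := (hmemST 0).mpr hπ0T
  have h1S : (1 : Fin (m + 2)) ∈ S := (hmemST 1).mpr hπ1T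
  set f := S.orderIsoOfFin hScard with hf
  set g := T.orderIsoOfFin hTcard with hg
  set ι : Fin k → Fin (m + 2) := fun t => (f t : Fin (m + 2)) with hι
  have hιmono : StrictMono ι := by
    intro s t hst
    exact Subtype.coe_lt_coe.mpr (f.lt_iff_lt.mpr hst)
  have hι0 : ι ⟨0, h0⟩ = 0 := by
    have hr : ((f.symm ⟨0, h0S⟩ : Fin k) : ℕ) = 0 := by
      rw [rank_eq]
      convert Finset.card_empty
      ext v
      simp only [Finset.mem_filter, Finset.notMem_empty, iff_false, not_and]
      intro _
      exact Fin.not_lt_zero _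
    have he : f.symm ⟨0, h0S⟩ = ⟨0, h0⟩ := Fin.ext (by simpa using hr)
    have := congrArg (fun z => (f z : Fin (m + 2))) he
    simp only [OrderIso.apply_symm_apply] at this
    exact this.symm
  have hι1 : ι ⟨1, h1⟩ = 1 := by
    have hfil : S.filter (· < (1 : Fin (m + 2))) = {0} := by
      ext v
      simp only [Finset.mem_filter, Finset.mem_singleton]
      constructor
      · rintro ⟨hvS, hv1⟩
        apply Fin.ext
        have := Fin.lt_def.mp hv1
        simp only [Fin.val_one] at this
        simpa using Nat.lt_one_iff.mp this
      · rintro rfl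
        refine ⟨h0S, ?_⟩
        rw [Fin.lt_def]
        simp
    have hr : ((f.symm ⟨1, h1S⟩ : Fin k) : ℕ) = 1 := by
      rw [rank_eq]
      show (S.filter (· < (1 : Fin (m + 2)))).card = 1
      rw [hfil, Finset.card_singleton]
    have he : f.symm ⟨1, h1S⟩ = ⟨1, h1⟩ := Fin.ext (by simpa using hr)
    have := congrArg (fun z => (f z : Fin (m + 2))) he
    simp only [OrderIso.apply_symm_apply] at this
    exact this.symm
  set σ : Equiv.Perm (Fin k) :=
    f.toEquiv.trans ((Equiv.subtypeEquiv (π : Equiv.Perm (Fin (m + 2))) hmemST).trans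
      g.toEquiv.symm) with hσdef
  have hσ : ∀ t, σ t = g.symm ⟨π (ι t), (hmemST _).mp (f t).2⟩ := fun t => rfl
  have hord : ∀ s t, σ s < σ t ↔ π (ι s) < π (ι t) := by
    intro s t
    rw [hσ s, hσ t]
    rw [g.symm.lt_iff_lt]
    exact Subtype.mk_lt_mk
  have hσ0 : (σ ⟨0, h0⟩ : ℕ) = a - 1 := by
    rw [hσ, rank_eq]
    have hfe : T.filter (· < π (ι ⟨0, h0⟩)) =
        Finset.image wf (Finset.univ.filter (fun t : Fin k => t < ⟨a - 1, hka⟩)) := by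
      rw [hι0, hT, Finset.filter_image]
      congr 1
      ext t
      simp only [Finset.mem_filter, Finset.mem_univ, true_and]
      rw [← hwx]
      exact hwfmono.lt_iff_lt
    rw [hfe, Finset.card_image_of_injective _ hwfmono.injective, fin_card_filter_lt]
  have hσ1 : (σ ⟨1, h1⟩ : ℕ) = a + l - 1 := by
    rw [hσ, rank_eq]
    have hfe : T.filter (· < π (ι ⟨1, h1⟩)) =
        Finset.image wf (Finset.univ.filter (fun t : Fin k => t < ⟨a + l - 1, hkal⟩)) := by
      rw [hι1, hT, Finset.filter_image]
      congr 1
      ext t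
      simp only [Finset.mem_filter, Finset.mem_univ, true_and]
      rw [← hwy]
      exact hwfmono.lt_iff_lt
    rw [hfe, Finset.card_image_of_injective _ hwfmono.injective, fin_card_filter_lt]
  refine ⟨σ, h0, h1, by omega, by omega, ι, hιmono, by rw [hι0]; rfl, ?_, hord⟩
  intro j hj hj0
  subst hj0
  have e1 : ι ⟨0 + 1, hj⟩ = ι ⟨1, h1⟩ := rfl
  have e0 : ι ⟨0, by omega⟩ = ι ⟨0, h0⟩ := rfl
  rw [e1, e0, hι0, hι1]
  simp

end crit2

section count
variable {a l k : ℕ}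

lemma cCf_eq_card {M : ℕ} (t : Fin (M + 1)) :
    cCf a l k (M + 1) ((t : ℕ) + 1) =
      Nat.card {π : Equiv.Perm (Fin (M + 1)) // AvoidsC a l k π ∧ π 0 = t} := by
  unfold cCf
  apply Nat.card_congr
  apply Equiv.subtypeEquivRight
  intro π
  have h00 : (⟨0, Nat.succ_pos M⟩ : Fin (M + 1)) = 0 := by
    apply Fin.ext; simp
  constructor
  · rintro ⟨hav, hfirst⟩
    refine ⟨hav, ?_⟩
    have := hfirst (Nat.succ_pos M)
    rw [h00] at this
    exact Fin.ext (by omega)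
  · rintro ⟨hav, rfl⟩
    refine ⟨hav, fun hn => ?_⟩
    rw [h00]

lemma card_fiber_tail {m : ℕ} (ha : 1 ≤ a) (hl : 1 ≤ l) (hk : a + l ≤ k) (p : Fin (m + 2)) :
    Nat.card {π : Equiv.Perm (Fin (m + 2)) // AvoidsC a l k π ∧ π 0 = p} =
      Nat.card {e : Equiv.Perm (Fin (m + 1)) // AvoidsC a l k e ∧
        ¬ badCond a l k (m + 2) (p : ℕ) ((p.succAbove (e 0)) : ℕ)} := by
  apply Nat.card_congr
  have hcons1 : ∀ e : Equiv.Perm (Fin (m + 1)), consPerm p e 1 = p.succAbove (e 0) := by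
    intro e
    rw [← Fin.succ_zero_eq_one, consPerm_succ]
  have htail1 : ∀ π : Equiv.Perm (Fin (m + 2)), π 0 = p →
      π 1 = p.succAbove (tailPerm π 0) := by
    intro π hp
    rw [← Fin.succ_zero_eq_one, ← succAbove_tailPerm, hp]
  refine ⟨fun x => ⟨tailPerm x.1, ?_⟩, fun y => ⟨consPerm p y.1, ?_⟩, ?_, ?_⟩
  · obtain ⟨π, hav, hp⟩ := x
    obtain ⟨hta, hnb⟩ := (avoids_iff π).mp hav
    refine ⟨hta, fun hb => hnb (badStart_mpr ha hl hk ?_)⟩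
    rw [hp, htail1 π hp]
    exact hb
  · obtain ⟨e, he, hb⟩ := y
    constructor
    · rw [avoids_iff (consPerm p e)]
      refine ⟨by rwa [tailPerm_consPerm], fun hbs => hb ?_⟩
      have := badStart_mp hl hk hbs
      rwa [consPerm_zero, hcons1] at this
    · exact consPerm_zero p e
  · rintro ⟨π, hav, hp⟩
    apply Subtype.ext
    have h2 : consPerm p (tailPerm π) = π :=
      congrArg Subtype.val ((fiberEquiv p).left_inv ⟨π, hp⟩)
    exact h2
  · rintro ⟨e, he, hb⟩
    apply Subtype.ext
    exact (fiberEquiv p).right_inv e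

lemma card_sum_first {M : ℕ} (P : Fin (M + 1) → Prop) [DecidablePred P] :
    Nat.card {e : Equiv.Perm (Fin (M + 1)) // AvoidsC a l k e ∧ P (e 0)} =
      ∑ t : Fin (M + 1), if P t then cCf a l k (M + 1) ((t : ℕ) + 1) else 0 := by
  classical
  rw [Nat.card_eq_fintype_card, Fintype.card_subtype]
  rw [Finset.card_eq_sum_card_fiberwise (f := fun e => e 0) (t := Finset.univ)
    (fun x _ => Finset.mem_univ _)]
  apply Finset.sum_congr rfl
  intro t _
  by_cases hPt : P t
  · rw [if_pos hPt, cCf_eq_card, Nat.card_eq_fintype_card, Fintype.card_subtype]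
    congr 1
    ext e
    simp only [Finset.mem_filter, Finset.mem_univ, true_and]
    constructor
    · rintro ⟨⟨hav, _⟩, h0⟩; exact ⟨hav, h0⟩
    · rintro ⟨hav, h0⟩; exact ⟨⟨hav, h0 ▸ hPt⟩, h0⟩
  · rw [if_neg hPt]
    convert Finset.card_empty
    ext e
    simp only [Finset.mem_filter, Finset.mem_univ, true_and, Finset.notMem_empty, iff_false,
      not_and]
    rintro ⟨_, hP⟩ h0
    exact hPt (h0 ▸ hP)

lemma cC_eq_sum_first {M : ℕ} :
    cC a l k (M + 1) = ∑ t : Fin (M + 1), cCf a l k (M + 1) ((t : ℕ) + 1) := by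
  have := card_sum_first (a := a) (l := l) (k := k) (P := fun _ : Fin (M + 1) => True)
  simp only [if_true] at this
  rw [← this]
  unfold cC
  apply Nat.card_congr
  exact Equiv.subtypeEquivRight (fun e => by simp)

lemma card_fiber_boundary {m : ℕ} (ha : 1 ≤ a) (hl : 1 ≤ l) (hk : a + l ≤ k) (p : Fin (m + 2))
    (hyp : ∀ y : ℕ, ¬ badCond a l k (m + 2) (p : ℕ) y) :
    Nat.card {π : Equiv.Perm (Fin (m + 2)) // AvoidsC a l k π ∧ π 0 = p} = cC a l k (m + 1) := by
  rw [card_fiber_tail ha hl hk p]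
  unfold cC
  apply Nat.card_congr
  exact Equiv.subtypeEquivRight (fun e => by simp [hyp])

open Classical in
lemma card_fiber_sum {m : ℕ} (ha : 1 ≤ a) (hl : 1 ≤ l) (hk : a + l ≤ k) (p : Fin (m + 2)) :
    Nat.card {π : Equiv.Perm (Fin (m + 2)) // AvoidsC a l k π ∧ π 0 = p} =
      ∑ t : Fin (m + 1), if ¬ badCond a l k (m + 2) (p : ℕ) ((p.succAbove t : Fin (m + 2)) : ℕ)
        then cCf a l k (m + 1) ((t : ℕ) + 1) else 0 := by
  rw [card_fiber_tail ha hl hk p]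
  exact card_sum_first
    (P := fun t => ¬ badCond a l k (m + 2) (p : ℕ) ((p.succAbove t : Fin (m + 2)) : ℕ))

end count

section final
variable {a l k : ℕ}

lemma cCf_boundary {M : ℕ} (ha : 1 ≤ a) (hl : 1 ≤ l) (hk : a + l ≤ k) {i : ℕ} (hi1 : 1 ≤ i)
    (hilt : i - 1 < M + 2) (hbad : ∀ y, ¬ badCond a l k (M + 2) (i - 1) y) :
    cCf a l k (M + 2) i = cC a l k (M + 1) := by
  set p : Fin (M + 2) := ⟨i - 1, hilt⟩ with hp
  have hip : i = (p : ℕ) + 1 := by simp only [hp]; omega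
  rw [hip, cCf_eq_card p]
  exact card_fiber_boundary ha hl hk p (by simpa [hp] using hbad)

/-- Lemma 2.2: for `1 ≤ a < a + l ≤ k`, `n ≥ k`, and `a ≤ j ≤ n - k + a`,
`c_{a,l}^k(n; j) = (k-l-1)·c_{a,l}^k(n-2) + Σ_{i=a}^{j+l-2} c_{a,l}^k(n-1; i)`. -/
theorem cCf_rec (a l k n j : ℕ) (ha : 1 ≤ a) (hl : 1 ≤ l) (hk : a + l ≤ k) (hn : k ≤ n)
    (hj1 : a ≤ j) (hj2 : j ≤ n - k + a) :
    cCf a l k n j = (k - l - 1) * cC a l k (n - 2) +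
      ∑ i ∈ Finset.Icc a (j + l - 2), cCf a l k (n - 1) i := by
  classical
  obtain ⟨m, rfl⟩ : ∃ m, n = m + 2 := ⟨n - 2, by omega⟩
  have hn1 : (m + 2 : ℕ) - 1 = m + 1 := rfl
  have hn2 : (m + 2 : ℕ) - 2 = m := rfl
  rw [hn1, hn2]
  have hjk : j + k ≤ m + 2 + a := by omega
  have hjlt : j - 1 < m + 2 := by omega
  set p : Fin (m + 2) := ⟨j - 1, hjlt⟩ with hpdef
  have hpv : (p : ℕ) = j - 1 := rfl
  have hjp : j = (p : ℕ) + 1 := by omega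
  -- LHS as a fiber count and then a sum over the second letter
  have hL : cCf a l k (m + 2) j =
      Nat.card {π : Equiv.Perm (Fin (m + 2)) // AvoidsC a l k π ∧ π 0 = p} := by
    rw [hjp]; exact cCf_eq_card p
  rw [hL, card_fiber_sum ha hl hk p]
  -- rewrite each term arithmetically
  set good : ℕ → Prop := fun i => i ≤ j + l - 2 ∨ m + 2 + a + l ≤ i + k with hgood
  have hterm : ∀ t : Fin (m + 1),
      (if ¬ badCond a l k (m + 2) (p : ℕ) ((p.succAbove t : Fin (m + 2)) : ℕ)
        then cCf a l k (m + 1) ((t : ℕ) + 1) else 0) =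
      (if good ((t : ℕ) + 1) then cCf a l k (m + 1) ((t : ℕ) + 1) else 0) := by
    intro t
    apply if_congr ?_ rfl rfl
    have htlt : (t : ℕ) < m + 1 := t.isLt
    rcases lt_or_ge (Fin.castSucc t) p with hc | hc
    · have hv : ((p.succAbove t : Fin (m + 2)) : ℕ) = (t : ℕ) := by
        rw [Fin.succAbove_of_castSucc_lt _ _ hc]; rfl
      have hc' : (t : ℕ) < j - 1 := by
        have := Fin.lt_def.mp hc; simpa [hpv] using this
      rw [hv]
      simp only [badCond, hgood, hpv]
      omega
    · have hv : ((p.succAbove t : Fin (m + 2)) : ℕ) = (t : ℕ) + 1 := by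
        rw [Fin.succAbove_of_le_castSucc _ _ hc]; rfl
      have hc' : j - 1 ≤ (t : ℕ) := by
        have := Fin.le_def.mp hc; simpa [hpv] using this
      rw [hv]
      simp only [badCond, hgood, hpv]
      omega
  rw [Finset.sum_congr rfl (fun t _ => hterm t)]
  -- convert to a sum over ℕ
  have hsum1 : ∑ t : Fin (m + 1), (if good ((t : ℕ) + 1) then cCf a l k (m + 1) ((t : ℕ) + 1) else 0)
      = ∑ i ∈ Finset.range (m + 1), (if good (i + 1) then cCf a l k (m + 1) (i + 1) else 0) :=
    Fin.sum_univ_eq_sum_range (fun i => if good (i + 1) then cCf a l k (m + 1) (i + 1) else 0) (m + 1)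
  rw [hsum1]
  have hsum2 : ∑ i ∈ Finset.range (m + 1), (if good (i + 1) then cCf a l k (m + 1) (i + 1) else 0)
      = ∑ i ∈ Finset.Icc 1 (m + 1), (if good i then cCf a l k (m + 1) i else 0) := by
    apply Finset.sum_nbij' (i := fun i => i + 1) (j := fun i => i - 1)
    · intro i hi; simp only [Finset.mem_range] at hi; simp only [Finset.mem_Icc]; omega
    · intro i hi; simp only [Finset.mem_Icc] at hi; simp only [Finset.mem_range]; omega
    · intro i hi; omega
    · intro i hi; simp only [Finset.mem_Icc] at hi; omega
    · intro i hi; rfl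
  rw [hsum2, Finset.sum_ite, Finset.sum_const_zero, add_zero]
  -- identify the filtered set
  have hfe : (Finset.Icc 1 (m + 1)).filter good =
      (Finset.Icc 1 (a - 1) ∪ Finset.Icc a (j + l - 2)) ∪
        Finset.Icc (m + 2 + a + l - k) (m + 1) := by
    ext i
    simp only [Finset.mem_filter, Finset.mem_union, Finset.mem_Icc, hgood]
    omega
  rw [hfe]
  have hd1 : Disjoint (Finset.Icc 1 (a - 1) ∪ Finset.Icc a (j + l - 2))
      (Finset.Icc (m + 2 + a + l - k) (m + 1)) := by
    rw [Finset.disjoint_left]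
    intro i hi hi2
    simp only [Finset.mem_union, Finset.mem_Icc] at hi hi2
    omega
  have hd2 : Disjoint (Finset.Icc 1 (a - 1)) (Finset.Icc a (j + l - 2)) := by
    rw [Finset.disjoint_left]
    intro i hi hi2
    simp only [Finset.mem_Icc] at hi hi2
    omega
  rw [Finset.sum_union hd1, Finset.sum_union hd2]
  -- boundary sums are constant
  have hb1 : ∀ i ∈ Finset.Icc 1 (a - 1), cCf a l k (m + 1) i = cC a l k m := by
    intro i hi
    simp only [Finset.mem_Icc] at hi
    obtain ⟨m', rfl⟩ : ∃ m', m = m' + 1 := ⟨m - 1, by omega⟩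
    exact cCf_boundary ha hl hk (by omega) (by omega)
      (fun y hy => by obtain ⟨h1, -, -⟩ := hy; omega)
  have hb2 : ∀ i ∈ Finset.Icc (m + 2 + a + l - k) (m + 1), cCf a l k (m + 1) i = cC a l k m := by
    intro i hi
    simp only [Finset.mem_Icc] at hi
    obtain ⟨m', rfl⟩ : ∃ m', m = m' + 1 := ⟨m - 1, by omega⟩
    refine cCf_boundary ha hl hk (by omega) (by omega) (fun y hy => ?_)
    obtain ⟨-, h2, h3⟩ := hy
    omega
  rw [Finset.sum_congr rfl hb1, Finset.sum_congr rfl hb2, Finset.sum_const, Finset.sum_const,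
    Nat.card_Icc, Nat.card_Icc, smul_eq_mul, smul_eq_mul]
  have hcard1 : a - 1 + 1 - 1 = a - 1 := by omega
  have hcard2 : m + 1 + 1 - (m + 2 + a + l - k) = k - a - l := by omega
  rw [hcard1, hcard2]
  have hconst : (a - 1) * cC a l k m + (k - a - l) * cC a l k m = (k - l - 1) * cC a l k m := by
    rw [← Nat.add_mul]
    congr 1
    omega
  omega

end final
end
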